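/- arXiv:1609.06875 — 10 statements merged into one kernel-verified Lean document; each statement's English description precedes it below -/
import Mathlib

section
/- Suppose (c_k)_{k≥1} is a log-convex sequence of nonnegative real numbers with c_1² ≤ c_2. Then the sequences (a_k)_{k≥0} and (b_k)_{k≥0} defined by the exponential formula satisfy, for every k ≥ 1: a_k² ≤ a_{k−1}·a_{k+1} and (k+1)·b_k² ≤ k·b_{k−1}·b_{k+1}. -/
/-!
Put `c₀ = 1`; then `c₁² ≤ c₂` is the first instance of log-convexity, and the whole sequence
`(c_k)_{k ≥ 0}` is log-convex. Unless `c ≡ 0` beyond `c₀` (and then `a_k = 0` for `k ≥ 1`), all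
`c_k` are positive, hence so are the `a_k`, and log-convexity makes the ratios `c_{k+1}/c_k`
nondecreasing; in particular `c₁ c_k ≤ c_{k+1}`, which gives `c₁ a_k ≤ a_{k+1}`.

Log-convexity of `a` is proved by induction. Comparing the recursion for `(k+1) a_{k+1}`,
`(k+2) a_{k+2}`, `(k+3) a_{k+3}` yields the identity
`c_{k+2} ((k+1) a_{k+1} ((k+3) a_{k+3} - c₁ a_{k+2}) - (k+2) a_{k+2} ((k+2) a_{k+2} - c₁ a_{k+1}))
  = ∑_{i ≤ k} (c_{i+1} c_{k+3} - c_{i+2} c_{k+2}) ((k+2) a_{k+2} a_{k-i} - (k+1) a_{k+1} a_{k+1-i})`,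
whose summands are products of two nonnegative factors: the first by monotonicity of the ratios
of `c`, the second by that of `a` below `k + 2`, the induction hypothesis. Together with
`c₁ a_{k+1} ≤ a_{k+2}` this gives `(k+1)(k+3) a_{k+1} a_{k+3} ≥ ((k+2)² - 1) a_{k+2}²`.
The inequality for `b_k = k! a_k` is the same one rescaled.
-/

open Finset

def LogConvexSeq (s : ℕ → ℝ) : Prop :=
  ∀ n, s (n + 1) ^ 2 ≤ s n * s (n + 2)

namespace LogConvexSeq

variable {s : ℕ → ℝ}

theorem eq_zero_of_le (hs : LogConvexSeq s) {m n : ℕ} (hm : s m = 0) (hmn : m ≤ n) :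
    s n = 0 := by
  induction n, hmn using Nat.le_induction with
  | base => exact hm
  | succ n _ ih =>
    have h := hs n
    rw [ih, zero_mul] at h
    exact pow_eq_zero_iff two_ne_zero |>.1 (le_antisymm h (sq_nonneg _))

theorem pos (hs : LogConvexSeq s) (h0 : 0 < s 0) (h1 : 0 < s 1) (n : ℕ) : 0 < s n := by
  suffices ∀ n, 0 < s n ∧ 0 < s (n + 1) from (this n).1
  intro n
  induction n with
  | zero => exact ⟨h0, h1⟩
  | succ n ih =>
    refine ⟨ih.2, pos_of_mul_pos_right ?_ ih.1.le⟩
    exact (pow_pos ih.2 2).trans_le (hs n)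

end LogConvexSeq

theorem succ_mul_le_mul_succ_of_sq_le_mul {s : ℕ → ℝ} {N i j : ℕ} (hpos : ∀ n, 0 < s n)
    (hs : ∀ n < N, s (n + 1) ^ 2 ≤ s n * s (n + 2)) (hij : i ≤ j) (hjN : j ≤ N) :
    s (i + 1) * s j ≤ s i * s (j + 1) := by
  induction j, hij using Nat.le_induction with
  | base => rw [mul_comm]
  | succ j _ ih =>
    have hj := ih (by omega)
    have hcancel : 0 < s j * s (j + 1) := mul_pos (hpos j) (hpos (j + 1))
    refine le_of_mul_le_mul_right ?_ hcancel
    calc s (i + 1) * s (j + 1) * (s j * s (j + 1))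
        = s (i + 1) * s j * s (j + 1) ^ 2 := by ring
      _ ≤ s i * s (j + 1) * (s j * s (j + 2)) :=
        mul_le_mul hj (hs j (by omega)) (sq_nonneg _) (mul_nonneg (hpos i).le (hpos _).le)
      _ = s i * s (j + 1 + 1) * (s j * s (j + 1)) := by ring

/-- The recursion of the exponential formula, reindexed by `j = i + 1`; its solutions are the
coefficients of `a₀ · exp (∑_j c_j u^j / j)`. -/
def ExpFormula (c a : ℕ → ℝ) : Prop :=
  ∀ m : ℕ, ((m : ℝ) + 1) * a (m + 1) = ∑ i ∈ range (m + 1), c (i + 1) * a (m - i)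

namespace ExpFormula

variable {c a : ℕ → ℝ}

theorem sum_mul_succ_sub_eq (h : ExpFormula c a) (m : ℕ) :
    ∑ i ∈ range (m + 1), c (i + 1) * a (m + 1 - i) = (m + 2) * a (m + 2) - c (m + 2) * a 0 := by
  have h' := h (m + 1)
  rw [sum_range_succ, Nat.sub_self] at h'
  push_cast at h'
  linarith

theorem sum_succ_mul_eq (h : ExpFormula c a) (m : ℕ) :
    ∑ i ∈ range (m + 1), c (i + 2) * a (m - i) = (m + 2) * a (m + 2) - c 1 * a (m + 1) := by
  have h' := h (m + 1)
  rw [sum_range_succ'] at h'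
  simp only [Nat.add_sub_add_right, Nat.sub_zero, Nat.cast_add, Nat.cast_one] at h'
  linarith

theorem pos (h : ExpFormula c a) (hc : ∀ n, 0 < c (n + 1)) (ha0 : 0 < a 0) (n : ℕ) :
    0 < a n := by
  induction n using Nat.strong_induction_on with
  | _ n ih =>
    cases n with
    | zero => exact ha0
    | succ m =>
      have hsum : 0 < ∑ i ∈ range (m + 1), c (i + 1) * a (m - i) :=
        sum_pos (fun i _ => mul_pos (hc i) (ih _ (by omega))) nonempty_range_add_one
      rw [← h m] at hsum
      exact pos_of_mul_pos_right hsum (by positivity)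

theorem eq_zero (h : ExpFormula c a) (hc : ∀ n, c (n + 1) = 0) (n : ℕ) : a (n + 1) = 0 := by
  have h' := h n
  simp only [hc, zero_mul, sum_const_zero] at h'
  exact (mul_eq_zero.1 h').resolve_left (by positivity)

theorem mul_le_succ (h : ExpFormula c a) (hc : ∀ n, c 1 * c (n + 1) ≤ c (n + 2))
    (ha : ∀ n, 0 ≤ a n) (m : ℕ) : c 1 * a (m + 1) ≤ a (m + 2) := by
  have hsum : c 1 * ((m + 1) * a (m + 1)) ≤ (m + 2) * a (m + 2) - c 1 * a (m + 1) := by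
    rw [h m, ← h.sum_succ_mul_eq, mul_sum]
    refine sum_le_sum fun i _ => ?_
    rw [← mul_assoc]
    exact mul_le_mul_of_nonneg_right (hc i) (ha _)
  have hm : (0 : ℝ) < m + 2 := by positivity
  nlinarith

theorem sq_one_le (h : ExpFormula c a) (hc : c 1 ^ 2 ≤ c 2) :
    a 1 ^ 2 ≤ a 0 * a 2 := by
  have h0 := h 0
  have h1 := h 1
  simp only [sum_range_succ, sum_range_zero] at h0 h1
  norm_num at h0 h1
  rw [h0] at h1 ⊢
  linear_combination -(a 0 / 2) * h1 + (1 / 2) * mul_le_mul_of_nonneg_left hc (sq_nonneg (a 0))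

theorem sum_cross_terms_eq (h : ExpFormula c a) (k : ℕ) :
    ∑ i ∈ range (k + 1), (c (i + 1) * c (k + 3) - c (i + 2) * c (k + 2)) *
        ((k + 2) * a (k + 2) * a (k - i) - (k + 1) * a (k + 1) * a (k + 1 - i)) =
      c (k + 2) * ((k + 1) * a (k + 1) * ((k + 3) * a (k + 3) - c 1 * a (k + 2)) -
        (k + 2) * a (k + 2) * ((k + 2) * a (k + 2) - c 1 * a (k + 1))) := by
  have h3 : ∑ i ∈ range (k + 1), c (i + 2) * a (k + 1 - i) =
      (k + 3) * a (k + 3) - c 1 * a (k + 2) - c (k + 3) * a 0 := by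
    have h' := h.sum_succ_mul_eq (k + 1)
    rw [sum_range_succ, Nat.sub_self] at h'
    push_cast at h'
    linarith
  have hsplit : ∑ i ∈ range (k + 1), (c (i + 1) * c (k + 3) - c (i + 2) * c (k + 2)) *
        ((k + 2) * a (k + 2) * a (k - i) - (k + 1) * a (k + 1) * a (k + 1 - i)) =
      c (k + 3) * ((k + 2) * a (k + 2)) * ∑ i ∈ range (k + 1), c (i + 1) * a (k - i)
      - c (k + 3) * ((k + 1) * a (k + 1)) * ∑ i ∈ range (k + 1), c (i + 1) * a (k + 1 - i)
      - c (k + 2) * ((k + 2) * a (k + 2)) * ∑ i ∈ range (k + 1), c (i + 2) * a (k - i)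
      + c (k + 2) * ((k + 1) * a (k + 1)) * ∑ i ∈ range (k + 1), c (i + 2) * a (k + 1 - i) := by
    simp only [mul_sum, ← sum_sub_distrib, ← sum_add_distrib]
    exact sum_congr rfl fun i _ => by ring
  rw [hsplit, ← h k, h.sum_mul_succ_sub_eq, h.sum_succ_mul_eq, h3]
  ring

theorem sq_le_mul_of_forall_lt (h : ExpFormula c a) (hc : LogConvexSeq c) (hc0 : c 0 = 1)
    (hcpos : ∀ n, 0 < c n) (hapos : ∀ n, 0 < a n) (k : ℕ)
    (ha : ∀ n < k + 1, a (n + 1) ^ 2 ≤ a n * a (n + 2)) :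
    a (k + 2) ^ 2 ≤ a (k + 1) * a (k + 3) := by
  have hcross : 0 ≤ ∑ i ∈ range (k + 1), (c (i + 1) * c (k + 3) - c (i + 2) * c (k + 2)) *
      ((k + 2) * a (k + 2) * a (k - i) - (k + 1) * a (k + 1) * a (k + 1 - i)) := by
    refine sum_nonneg fun i hi => ?_
    have hik := mem_range.1 hi
    refine mul_nonneg (sub_nonneg.2 ?_) (sub_nonneg.2 ?_)
    · exact succ_mul_le_mul_succ_of_sq_le_mul hcpos (fun n _ => hc n) (i := i + 1) (j := k + 2)
        (by omega) le_rfl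
    · have hidx : k - i + 1 = k + 1 - i := by omega
      have hratio : a (k + 1 - i) * a (k + 1) ≤ a (k - i) * a (k + 2) := by
        simpa only [hidx] using succ_mul_le_mul_succ_of_sq_le_mul hapos ha
          (i := k - i) (j := k + 1) (by omega) le_rfl
      nlinarith [hapos (k - i), hapos (k + 2)]
  rw [h.sum_cross_terms_eq] at hcross
  have hD := nonneg_of_mul_nonneg_right hcross (hcpos (k + 2))
  have hstep : c 1 * a (k + 1) ≤ a (k + 2) := by
    refine h.mul_le_succ (fun n => ?_) (fun n => (hapos n).le) k
    simpa [hc0] using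
      succ_mul_le_mul_succ_of_sq_le_mul hcpos (fun n _ => hc n) (i := 0) (j := n + 1)
        (by omega) le_rfl
  have hK : (0 : ℝ) < (k + 1) * (k + 3) := by positivity
  refine le_of_mul_le_mul_left ?_ hK
  nlinarith [mul_le_mul_of_nonneg_right hstep (hapos (k + 2)).le]

theorem logConvexSeq (h : ExpFormula c a) (hc : LogConvexSeq c) (hc0 : c 0 = 1)
    (hc1 : 0 ≤ c 1) (ha0 : 0 < a 0) : LogConvexSeq a := by
  rcases hc1.eq_or_lt with hc1 | hc1
  · have hzero n : a (n + 1) = 0 := h.eq_zero (fun n => hc.eq_zero_of_le hc1.symm (by omega)) n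
    intro n
    simp [hzero]
  have hcpos := hc.pos (hc0 ▸ one_pos) hc1
  have hapos := h.pos (fun n => hcpos (n + 1)) ha0
  intro n
  induction n using Nat.strong_induction_on with
  | _ n ih =>
    cases n with
    | zero => exact h.sq_one_le (by simpa [hc0] using hc 0)
    | succ k => exact h.sq_le_mul_of_forall_lt hc hc0 hcpos hapos k ih

end ExpFormula

theorem succ_mul_sq_factorial_mul_le {a : ℕ → ℝ} {n : ℕ} (h : a (n + 1) ^ 2 ≤ a n * a (n + 2)) :
    ((n + 1 : ℕ) + 1 : ℝ) * ((n + 1).factorial * a (n + 1)) ^ 2 ≤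
      ((n + 1 : ℕ) : ℝ) * ((n.factorial * a n) * ((n + 2).factorial * a (n + 2))) := by
  simp only [Nat.factorial_succ]
  push_cast
  calc ((n : ℝ) + 1 + 1) * (((n : ℝ) + 1) * n.factorial * a (n + 1)) ^ 2
      = ((n : ℝ) + 2) * (n + 1) ^ 2 * n.factorial ^ 2 * a (n + 1) ^ 2 := by ring
    _ ≤ ((n : ℝ) + 2) * (n + 1) ^ 2 * n.factorial ^ 2 * (a n * a (n + 2)) := by gcongr
    _ = _ := by ring

/-- If `(c k)_{k ≥ 1}` is a nonnegative log-convex sequence with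
`c 1 ^ 2 ≤ c 2`, then `(a k)` and `(b k)` from the exponential formula satisfy,
for every `k ≥ 1`, `a k ^ 2 ≤ a (k-1) * a (k+1)` and
`(k+1) * b k ^ 2 ≤ k * b (k-1) * b (k+1)`. -/
theorem stmt3 (c a b : ℕ → ℝ)
    (hc_nonneg : ∀ k : ℕ, 1 ≤ k → 0 ≤ c k)
    (hc_logconvex : ∀ k : ℕ, 1 ≤ k → c (k + 1) ^ 2 ≤ c k * c (k + 2))
    (hc12 : c 1 ^ 2 ≤ c 2)
    (ha0 : a 0 = 1)
    (harec : ∀ n : ℕ, ((n : ℝ) + 1) * a (n + 1)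
      = ∑ j ∈ Finset.Icc 1 (n + 1), c j * a (n + 1 - j))
    (hb : ∀ k : ℕ, b k = (Nat.factorial k : ℝ) * a k) :
    ∀ k : ℕ, 1 ≤ k →
      a k ^ 2 ≤ a (k - 1) * a (k + 1) ∧
      ((k : ℝ) + 1) * b k ^ 2 ≤ (k : ℝ) * (b (k - 1) * b (k + 1)) := by
  set e := Function.update c 0 1
  have he : LogConvexSeq e := by
    rintro (_ | n)
    · simpa [e] using hc12
    · simpa [e] using hc_logconvex (n + 1) (by omega)
  have hea : ExpFormula e a := by
    intro n
    rw [harec n, ← Ico_add_one_right_eq_Icc, sum_Ico_eq_sum_range]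
    exact sum_congr (by simp) fun i _ => by
      rw [show 1 + i = i + 1 by omega, show n + 1 - (i + 1) = n - i by omega]
      simp [e]
  have ha := hea.logConvexSeq he (by simp [e]) (by simpa [e] using hc_nonneg 1 le_rfl)
    (ha0 ▸ one_pos)
  rintro (_ | n) hk
  · omega
  refine ⟨ha n, ?_⟩
  simpa only [hb, Nat.add_sub_cancel] using succ_mul_sq_factorial_mul_le (ha n)
end

section
/- (Hansen, log-convex case.) Let λ > 0, let (f_k)_{k≥0} be nonnegative reals, and let (P_n)_{n≥0} be nonnegative reals with P_0 > 0 satisfying the Panjer recursion (n+1)·P_{n+1} = Σ_{k=0}^n λ·(k+1)·f_{k+1}·P_{n−k} for all n ≥ 0. Assume the sequence (k·f_k)_{k≥1} is log-convex. Then (P_n)_{n≥0} is log-convex if and only if λ·f_1² − 2·f_2 ≤ 0. -/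
/-!
Put `c₀ = 1` and `cₖ = λ k fₖ` for `k ≥ 1`, so that the recursion reads
`(n+1) Pₙ₊₁ = ∑_{k ≤ n} cₖ₊₁ Pₙ₋ₖ`, equivalently `∑_{k ≤ n} cₖ Pₙ₋ₖ = (n+1) Pₙ`. The hypothesis makes
`(cₖ)` log-convex from index `1` on, and `λ f₁² ≤ 2 f₂` says `c₁² ≤ c₀ c₂`, i.e. log-convexity at index `1`.

Necessity is the case `n = 0`: `P₀ P₂ - P₁² = P₀² (c₀ c₂ - c₁²) / 2`.
For sufficiency (when `c` is positive; otherwise `Pₙ = 0` for `n ≥ 1`) argue by strong induction.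
Log-convexity of `P` up to `t` makes `Aₖ = Pₜ₊₁ Pₜ₋ₖ - Pₜ Pₜ₊₁₋ₖ ≥ 0`, log-convexity of `c` makes
`Bₖ = cₜ₊₂ cₖ - cₜ₊₁ cₖ₊₁ ≥ 0`, and the convolution identities turn `∑_{k ≤ t} Aₖ Bₖ` into
`(t+2) cₜ₊₁ (Pₜ Pₜ₊₂ - Pₜ₊₁²) - Pₜ₊₁ (cₜ₊₂ Pₜ - cₜ₊₁ Pₜ₊₁)`, whose last bracket is again
nonnegative by the same termwise comparison applied to the recursion.
-/

open Finset

section LogConvex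

variable {s : ℕ → ℝ}

theorem mul_le_mul_of_sq_le_mul (hs : ∀ n, 0 < s n) {i n : ℕ} (hin : i ≤ n)
    (hlc : ∀ j, i ≤ j → j < n → s (j + 1) ^ 2 ≤ s j * s (j + 2)) :
    s (i + 1) * s n ≤ s i * s (n + 1) := by
  obtain ⟨d, rfl⟩ := Nat.exists_eq_add_of_le hin
  induction d generalizing i with
  | zero => rw [add_zero, mul_comm]
  | succ d ih =>
    have hnext : s (i + 2) * s (i + (d + 1)) ≤ s (i + 1) * s (i + (d + 1) + 1) := by
      have h := ih (i := i + 1) (by omega) fun j hij hjn => hlc j (by omega) (by omega)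
      rwa [show i + 1 + d = i + (d + 1) by omega] at h
    refine le_of_mul_le_mul_left ?_ (hs (i + 1))
    calc s (i + 1) * (s (i + 1) * s (i + (d + 1)))
        = s (i + 1) ^ 2 * s (i + (d + 1)) := by ring
      _ ≤ s i * s (i + 2) * s (i + (d + 1)) :=
        mul_le_mul_of_nonneg_right (hlc i le_rfl (by omega)) (hs _).le
      _ = s i * (s (i + 2) * s (i + (d + 1))) := by ring
      _ ≤ s i * (s (i + 1) * s (i + (d + 1) + 1)) := mul_le_mul_of_nonneg_left hnext (hs i).le
      _ = s (i + 1) * (s i * s (i + (d + 1) + 1)) := by ring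

theorem pos_of_sq_le_mul (h0 : 0 < s 0) (h1 : 0 < s 1)
    (hlc : ∀ n, s (n + 1) ^ 2 ≤ s n * s (n + 2)) (n : ℕ) : 0 < s n := by
  suffices ∀ n, 0 < s n ∧ 0 < s (n + 1) from (this n).1
  intro n
  induction n with
  | zero => exact ⟨h0, h1⟩
  | succ n ih =>
    exact ⟨ih.2, pos_of_mul_pos_right ((pow_pos ih.2 2).trans_le (hlc n)) ih.1.le⟩

theorem eq_zero_of_sq_le_mul {m : ℕ} (hm : s m = 0)
    (hlc : ∀ n, m ≤ n → s (n + 1) ^ 2 ≤ s n * s (n + 2)) : ∀ n, m ≤ n → s n = 0 := by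
  refine Nat.le_induction hm fun n hmn hn => ?_
  have h := hlc n hmn
  rw [hn, zero_mul] at h
  exact pow_eq_zero_iff two_ne_zero |>.1 (le_antisymm h (sq_nonneg _))

end LogConvex

def PanjerRec (c P : ℕ → ℝ) : Prop :=
  ∀ n : ℕ, ((n : ℝ) + 1) * P (n + 1) = ∑ k ∈ range (n + 1), c (k + 1) * P (n - k)

namespace PanjerRec

variable {c P : ℕ → ℝ}

theorem sum_range_mul_sub_eq (hrec : PanjerRec c P) (hc0 : c 0 = 1) (n : ℕ) :
    ∑ k ∈ range (n + 1), c k * P (n - k) = ((n : ℝ) + 1) * P n := by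
  cases n with
  | zero => simp [hc0]
  | succ n =>
    rw [sum_range_succ']
    simp only [Nat.add_sub_add_right, ← hrec n, hc0, Nat.sub_zero]
    push_cast
    ring

theorem pos (hrec : PanjerRec c P) (hc : ∀ n, 0 < c n) (hP0 : 0 < P 0) (n : ℕ) : 0 < P n := by
  induction n using Nat.strong_induction_on with
  | _ n ih =>
    cases n with
    | zero => exact hP0
    | succ n =>
      have hsum : 0 < ∑ k ∈ range (n + 1), c (k + 1) * P (n - k) :=
        sum_pos (fun k _ => mul_pos (hc _) (ih _ (by omega))) nonempty_range_add_one
      rw [← hrec n] at hsum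
      exact pos_of_mul_pos_right hsum (by positivity)

theorem sq_one_le_mul_iff (hrec : PanjerRec c P) (hc0 : c 0 = 1)
    (hP0 : 0 < P 0) : P 1 ^ 2 ≤ P 0 * P 2 ↔ c 1 ^ 2 ≤ c 0 * c 2 := by
  have h0 := hrec 0
  have h1 := hrec 1
  simp only [CharP.cast_eq_zero, zero_add, one_mul, range_one, zero_tsub, sum_singleton,
    Nat.cast_one, Nat.reduceAdd, sum_range_succ, tsub_zero, tsub_self] at h0 h1
  rw [h0] at h1
  have key : P 0 * P 2 - (c 1 * P 0) ^ 2 = P 0 ^ 2 / 2 * (c 0 * c 2 - c 1 ^ 2) := by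
    rw [hc0]
    linear_combination P 0 / 2 * h1
  rw [h0, ← sub_nonneg, key, mul_nonneg_iff_of_pos_left (by positivity), sub_nonneg]

theorem mul_succ_le_mul (hrec : PanjerRec c P) (hc0 : c 0 = 1) (hc : ∀ n, 0 < c n)
    (hlc : ∀ n, c (n + 1) ^ 2 ≤ c n * c (n + 2))
    (hP : ∀ n, 0 ≤ P n) (t : ℕ) : c (t + 1) * P (t + 1) ≤ c (t + 2) * P t := by
  have hsum : ∑ k ∈ range (t + 1), c (t + 1) * (c (k + 1) * P (t - k))
      ≤ ∑ k ∈ range (t + 1), c (t + 2) * (c k * P (t - k)) := by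
    refine sum_le_sum fun k hk => ?_
    have hck := mul_le_mul_of_sq_le_mul hc (i := k) (n := t + 1)
      (mem_range.1 hk).le fun j _ _ => hlc j
    nlinarith [hP (t - k)]
  rw [← mul_sum, ← mul_sum, ← hrec, hrec.sum_range_mul_sub_eq hc0] at hsum
  refine le_of_mul_le_mul_left ?_ (by positivity : (0 : ℝ) < t + 1)
  linarith

theorem sum_cross_mul_eq (hrec : PanjerRec c P) (hc0 : c 0 = 1) (t : ℕ) :
    ∑ k ∈ range (t + 1), (P (t + 1) * P (t - k) - P t * P (t + 1 - k)) *
        (c (t + 2) * c k - c (t + 1) * c (k + 1))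
      = ((t : ℝ) + 2) * c (t + 1) * (P t * P (t + 2) - P (t + 1) ^ 2)
        - P (t + 1) * (c (t + 2) * P t - c (t + 1) * P (t + 1)) := by
  have hconv := hrec.sum_range_mul_sub_eq hc0
  have hconv_succ : ∑ k ∈ range (t + 1), c k * P (t + 1 - k)
      = ((t : ℝ) + 2) * P (t + 1) - c (t + 1) * P 0 := by
    have h := hconv (t + 1)
    rw [sum_range_succ, Nat.sub_self] at h
    push_cast at h
    linarith
  have hrec_succ : ∑ k ∈ range (t + 1), c (k + 1) * P (t + 1 - k)
      = ((t : ℝ) + 2) * P (t + 2) - c (t + 2) * P 0 := by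
    have h := hrec (t + 1)
    rw [sum_range_succ, Nat.sub_self] at h
    push_cast at h
    linarith
  have hexpand : ∀ k, (P (t + 1) * P (t - k) - P t * P (t + 1 - k)) *
      (c (t + 2) * c k - c (t + 1) * c (k + 1))
      = c (t + 2) * P (t + 1) * (c k * P (t - k)) - c (t + 2) * P t * (c k * P (t + 1 - k))
        - c (t + 1) * P (t + 1) * (c (k + 1) * P (t - k))
        + c (t + 1) * P t * (c (k + 1) * P (t + 1 - k)) := fun k => by ring
  simp only [hexpand, sum_add_distrib, sum_sub_distrib, ← mul_sum, hconv, ← hrec t, hconv_succ,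
    hrec_succ]
  ring

theorem sq_le_mul_of_pos (hrec : PanjerRec c P) (hc0 : c 0 = 1) (hc : ∀ n, 0 < c n)
    (hlc : ∀ n, c (n + 1) ^ 2 ≤ c n * c (n + 2))
    (hP0 : 0 < P 0) (t : ℕ) : P (t + 1) ^ 2 ≤ P t * P (t + 2) := by
  have hP := hrec.pos hc hP0
  induction t using Nat.strong_induction_on with
  | _ t ih =>
    have hterm : ∀ k ∈ range (t + 1), 0 ≤ (P (t + 1) * P (t - k) - P t * P (t + 1 - k)) *
        (c (t + 2) * c k - c (t + 1) * c (k + 1)) := by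
      intro k hk
      have hkt : k ≤ t := Nat.lt_succ_iff.1 (mem_range.1 hk)
      have hPk := mul_le_mul_of_sq_le_mul hP (i := t - k) (n := t) (Nat.sub_le t k)
        fun j _ hj => ih j hj
      have hck := mul_le_mul_of_sq_le_mul hc (i := k) (n := t + 1) (by omega) fun j _ _ => hlc j
      rw [show t - k + 1 = t + 1 - k by omega] at hPk
      exact mul_nonneg (by linarith) (by linarith)
    have hsum := sum_nonneg hterm
    rw [hrec.sum_cross_mul_eq hc0] at hsum
    have hratio := hrec.mul_succ_le_mul hc0 hc hlc (fun n => (hP n).le) t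
    have hmain : 0 ≤ ((t : ℝ) + 2) * c (t + 1) * (P t * P (t + 2) - P (t + 1) ^ 2) := by
      linarith [mul_nonneg (hP (t + 1)).le (sub_nonneg.2 hratio)]
    exact sub_nonneg.1 (nonneg_of_mul_nonneg_right hmain (mul_pos (by positivity) (hc (t + 1))))

theorem sq_le_mul (hrec : PanjerRec c P) (hc0 : c 0 = 1) (hc1 : 0 ≤ c 1)
    (hlc : ∀ n, c (n + 1) ^ 2 ≤ c n * c (n + 2))
    (hP0 : 0 < P 0) (t : ℕ) : P (t + 1) ^ 2 ≤ P t * P (t + 2) := by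
  rcases hc1.eq_or_lt with hc1 | hc1
  · have hc := eq_zero_of_sq_le_mul hc1.symm fun n _ => hlc n
    have hP : ∀ n, P (n + 1) = 0 := fun n => by
      have h := hrec n
      rw [sum_eq_zero fun k _ => by rw [hc (k + 1) (by omega), zero_mul]] at h
      exact (mul_eq_zero.1 h).resolve_left (by positivity)
    simp [hP]
  · exact hrec.sq_le_mul_of_pos hc0 (pos_of_sq_le_mul (hc0 ▸ one_pos) hc1 hlc) hlc hP0 t

end PanjerRec

section PanjerCoeff

variable (lam : ℝ) (f : ℕ → ℝ)

def panjerCoeff (k : ℕ) : ℝ :=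
  if k = 0 then 1 else lam * k * f k

theorem panjerCoeff_zero : panjerCoeff lam f 0 = 1 :=
  if_pos rfl

theorem panjerCoeff_succ (k : ℕ) : panjerCoeff lam f (k + 1) = lam * ((k : ℝ) + 1) * f (k + 1) := by
  simp [panjerCoeff]

variable {lam f}

theorem sq_panjerCoeff_one_le_iff (hlam : 0 < lam) :
    panjerCoeff lam f 1 ^ 2 ≤ panjerCoeff lam f 0 * panjerCoeff lam f 2 ↔
      lam * f 1 ^ 2 - 2 * f 2 ≤ 0 := by
  have key : panjerCoeff lam f 0 * panjerCoeff lam f 2 - panjerCoeff lam f 1 ^ 2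
      = lam * -(lam * f 1 ^ 2 - 2 * f 2) := by
    rw [panjerCoeff_zero, panjerCoeff_succ, panjerCoeff_succ]
    push_cast
    ring
  rw [← sub_nonneg, key, mul_nonneg_iff_of_pos_left hlam, neg_nonneg]

theorem sq_panjerCoeff_le_mul
    (hlc : ∀ k : ℕ, 1 ≤ k →
      (((k : ℝ) + 1) * f (k + 1)) ^ 2 ≤ ((k : ℝ) * f k) * (((k : ℝ) + 2) * f (k + 2)))
    {k : ℕ} (hk : 1 ≤ k) :
    panjerCoeff lam f (k + 1) ^ 2 ≤ panjerCoeff lam f k * panjerCoeff lam f (k + 2) := by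
  obtain ⟨m, rfl⟩ := Nat.exists_eq_add_of_le' hk
  have h := mul_le_mul_of_nonneg_left (hlc (m + 1) hk) (sq_nonneg lam)
  rw [panjerCoeff_succ, panjerCoeff_succ, panjerCoeff_succ]
  push_cast at h ⊢
  linear_combination h

end PanjerCoeff

theorem stmt6_general (lam : ℝ) (hlam : 0 < lam) (f P : ℕ → ℝ)
    (hf_nonneg : ∀ k : ℕ, 0 ≤ f k)
    (hP0 : 0 < P 0)
    (hPrec : ∀ n : ℕ, ((n : ℝ) + 1) * P (n + 1)
      = ∑ k ∈ Finset.range (n + 1), lam * ((k : ℝ) + 1) * f (k + 1) * P (n - k))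
    (hkf_logconvex : ∀ k : ℕ, 1 ≤ k →
      (((k : ℝ) + 1) * f (k + 1)) ^ 2 ≤ ((k : ℝ) * f k) * (((k : ℝ) + 2) * f (k + 2))) :
    (∀ n : ℕ, P (n + 1) ^ 2 ≤ P n * P (n + 2)) ↔ lam * f 1 ^ 2 - 2 * f 2 ≤ 0 := by
  have hrec : PanjerRec (panjerCoeff lam f) P := fun n => by
    simp only [hPrec, panjerCoeff_succ]
  rw [← sq_panjerCoeff_one_le_iff hlam]
  refine ⟨fun hP => (hrec.sq_one_le_mul_iff (panjerCoeff_zero lam f) hP0).1 (hP 0),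
    fun hc1 => hrec.sq_le_mul (panjerCoeff_zero lam f) ?_ ?_ hP0⟩
  · rw [panjerCoeff_succ]
    exact mul_nonneg (by positivity) (hf_nonneg 1)
  · rintro (_ | k)
    exacts [hc1, sq_panjerCoeff_le_mul hkf_logconvex (Nat.le_add_left 1 k)]

/-- Hansen, log-convex case: with `λ > 0`, nonnegative `(f k)`,
nonnegative `(P n)` with `P 0 > 0` satisfying the Panjer recursion, and
`(k * f k)_{k ≥ 1}` log-convex, the sequence `(P n)` is log-convex if and only
if `λ * f 1 ^ 2 - 2 * f 2 ≤ 0`. -/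
theorem stmt6 (lam : ℝ) (hlam : 0 < lam) (f P : ℕ → ℝ)
    (hf_nonneg : ∀ k : ℕ, 0 ≤ f k)
    (hP_nonneg : ∀ n : ℕ, 0 ≤ P n)
    (hP0 : 0 < P 0)
    (hPrec : ∀ n : ℕ, ((n : ℝ) + 1) * P (n + 1)
      = ∑ k ∈ Finset.range (n + 1), lam * ((k : ℝ) + 1) * f (k + 1) * P (n - k))
    (hkf_logconvex : ∀ k : ℕ, 1 ≤ k →
      (((k : ℝ) + 1) * f (k + 1)) ^ 2 ≤ ((k : ℝ) * f k) * (((k : ℝ) + 2) * f (k + 2))) :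
    (∀ n : ℕ, P (n + 1) ^ 2 ≤ P n * P (n + 2)) ↔ lam * f 1 ^ 2 - 2 * f 2 ≤ 0 :=
  stmt6_general lam hlam f P hf_nonneg hP0 hPrec hkf_logconvex
end

section
/- In the polynomial ring ℤ[c_1, c_2, …] with the cycle-index polynomials (b_k)_{k≥0} defined by the falling-factorial recursion, for all integers 1 ≤ m ≤ n the element (n+1)·b_m·b_n − m·b_{m−1}·b_{n+1} lies in ℕ[𝒴], the subsemiring generated by the set 𝒴 = {c_1, c_2, …} ∪ {c_j·c_k − c_{j−1}·c_{k+1} : 0 < j ≤ k} (with c_0 = 1); that is, it can be written as a polynomial in elements of 𝒴 with nonnegative integer coefficients. -/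
/-!
Expanding `b_{m+1}` by the recursion and `(n+1) b_n = Σ_y (n)_y c_y b_{n-y}` (the recursion with
the `c₀ = 1` term added), the defect `(n+1) b_{m+1} b_n - (m+1) b_m b_{n+1}` becomes
`Σ_{x,y} (c_{x+1} c_y - c_x c_{y+1}) (m)_x (n)_y b_{m-x} b_{n-y}`. Grouping the terms `(x, y)` and
`(y, x)` with `x < y` leaves the generator `c_{x+1} c_y - c_x c_{y+1}` times the difference of two
weighted products `b_i b_j` with the same `i + j`. Moving one step from the unbalanced pair towards
the balanced one `i = j` changes the weighted product by a nonnegative multiple of a defect with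
smaller `m + n`, so the difference lies in `ℕ[𝒴]` by induction on `m + n`.
-/

open Finset

section

variable {A : Type*} [CommRing A]

theorem sum_range_descFactorial_mul_of_lt {m N : ℕ} (h : m < N) (f : ℕ → A) :
    ∑ x ∈ range N, (m.descFactorial x : A) * f x
      = ∑ x ∈ range (m + 1), (m.descFactorial x : A) * f x := by
  refine (sum_subset (range_subset_range.2 h) fun x _ hx => ?_).symm
  rw [mem_range, not_lt] at hx
  simp [Nat.descFactorial_eq_zero_iff_lt.2 hx]

theorem sum_range_sum_range_eq_sum_pairs (t : ℕ → ℕ → A) (ht : ∀ x, t x x = 0) (N : ℕ) :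
    ∑ x ∈ range N, ∑ y ∈ range N, t x y = ∑ y ∈ range N, ∑ x ∈ range y, (t x y + t y x) := by
  induction N with
  | zero => simp
  | succ N ih =>
    simp only [sum_range_succ, sum_add_distrib, ih, ht]
    abel

theorem Nat.descFactorial_mul_descFactorial_eq {m n x y x' y' : ℕ} (hx : x ≤ m) (hy : y ≤ n)
    (hx' : x' ≤ m) (hy' : y' ≤ n) (h₁ : m - x' = n - y) (h₂ : n - y' = m - x) :
    m.descFactorial x * n.descFactorial y = m.descFactorial x' * n.descFactorial y' := by
  refine Nat.eq_of_mul_eq_mul_right (Nat.mul_pos (m - x).factorial_pos (n - y).factorial_pos) ?_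
  calc m.descFactorial x * n.descFactorial y * ((m - x).factorial * (n - y).factorial)
      = ((m - x).factorial * m.descFactorial x) * ((n - y).factorial * n.descFactorial y) := by
        ring
    _ = ((m - x').factorial * m.descFactorial x') * ((n - y').factorial * n.descFactorial y') := by
        rw [Nat.factorial_mul_descFactorial hx, Nat.factorial_mul_descFactorial hy,
          Nat.factorial_mul_descFactorial hx', Nat.factorial_mul_descFactorial hy']
    _ = m.descFactorial x' * n.descFactorial y' * ((m - x).factorial * (n - y).factorial) := by
        rw [h₁, h₂]; ring

/-- The statement's `(n+1) b_m b_n - m b_{m-1} b_{n+1}` with `m` shifted by one, so that no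
truncated subtraction occurs. -/
def turanDefect (b : ℕ → A) (m n : ℕ) : A :=
  (n + 1 : A) * b (m + 1) * b n - (m + 1 : A) * b m * b (n + 1)

def crossTerm (b : ℕ → A) (m n x y : ℕ) : A :=
  (m.descFactorial x : A) * n.descFactorial y * (b (m - x) * b (n - y))

variable {c b : ℕ → A}

theorem crossTerm_succ_sub_crossTerm {m n x y : ℕ} (hx : x < m) (hy : y < n) :
    crossTerm b m n x (y + 1) - crossTerm b m n (x + 1) y
      = (m.descFactorial x : A) * n.descFactorial y * turanDefect b (m - x - 1) (n - y - 1) := by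
  obtain ⟨p, rfl⟩ := Nat.exists_eq_add_of_lt hx
  obtain ⟨q, rfl⟩ := Nat.exists_eq_add_of_lt hy
  simp only [crossTerm, turanDefect, Nat.descFactorial_succ,
    show x + p + 1 - x = p + 1 by omega, show y + q + 1 - y = q + 1 by omega,
    show x + p + 1 - (x + 1) = p by omega, show y + q + 1 - (y + 1) = q by omega,
    Nat.add_sub_cancel]
  push_cast
  ring

theorem crossTerm_eq_of_sub_eq {m n x y x' y' : ℕ} (hx : x ≤ m) (hy : y ≤ n)
    (hx' : x' ≤ m) (hy' : y' ≤ n) (h₁ : m - x' = n - y) (h₂ : n - y' = m - x) :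
    crossTerm b m n x y = crossTerm b m n x' y' := by
  have h := congrArg (Nat.cast (R := A))
    (Nat.descFactorial_mul_descFactorial_eq hx hy hx' hy' h₁ h₂)
  push_cast at h
  rw [crossTerm, crossTerm, h, h₁, h₂, mul_comm (b (n - y))]

variable {R : Subsemiring A}

section

variable {m n : ℕ} (hD : ∀ p q, p ≤ q → p + q < m + n → turanDefect b p q ∈ R)
include hD

theorem crossTerm_sub_crossTerm_mem (k : ℕ) : ∀ x y, x + k ≤ m → y + k ≤ n →
    m + y + k ≤ n + x + 1 → crossTerm b m n x (y + k) - crossTerm b m n (x + k) y ∈ R := by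
  induction k with
  | zero => simp
  | succ k ih =>
    intro x y hx hy hbal
    rw [show crossTerm b m n x (y + (k + 1)) - crossTerm b m n (x + (k + 1)) y
        = (crossTerm b m n x (y + k + 1) - crossTerm b m n (x + 1) (y + k))
          + (crossTerm b m n (x + 1) (y + k) - crossTerm b m n (x + 1 + k) y) by
        rw [add_assoc y, add_right_comm x]; abel,
      crossTerm_succ_sub_crossTerm (by omega) (by omega)]
    exact add_mem
      (mul_mem (mul_mem (natCast_mem R _) (natCast_mem R _)) (hD _ _ (by omega) (by omega)))
      (ih (x + 1) y (by omega) (by omega) (by omega))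

theorem crossTerm_sub_crossTerm_swap_mem (hb : ∀ k, b k ∈ R) {x y : ℕ} (hmn : m ≤ n)
    (hxy : x < y) (hy : y ≤ n) :
    crossTerm b m n x y - crossTerm b m n y x ∈ R := by
  by_cases hym : m < y
  · have hzero : crossTerm b m n y x = 0 := by
      simp [crossTerm, Nat.descFactorial_eq_zero_iff_lt.2 hym]
    rw [hzero, sub_zero, crossTerm]
    exact mul_mem (mul_mem (natCast_mem R _) (natCast_mem R _)) (mul_mem (hb _) (hb _))
  by_cases hbal : m + y ≤ n + x + 1
  · simpa [show x + (y - x) = y by omega] using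
      crossTerm_sub_crossTerm_mem hD (y - x) x x (by omega) (by omega) (by omega)
  · -- past the balanced pair: telescope from the mirror image of `(x, y)` instead
    obtain ⟨d, rfl⟩ := Nat.exists_eq_add_of_le hmn
    rw [crossTerm_eq_of_sub_eq (x' := y - d) (y' := x + d) (by omega) hy (by omega) (by omega)
      (by omega) (by omega)]
    simpa [show y - d + d = y by omega] using
      crossTerm_sub_crossTerm_mem hD d (y - d) x (by omega) (by omega) (by omega)

end

theorem succ_eq_sum_range_of_sum_Icc
    (hbrec : ∀ m : ℕ, b (m + 1)
      = ∑ j ∈ Icc 1 (m + 1), (m.descFactorial (j - 1) : A) * c j * b (m + 1 - j))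
    (m : ℕ) :
    b (m + 1) = ∑ x ∈ range (m + 1), (m.descFactorial x : A) * (c (x + 1) * b (m - x)) := by
  rw [hbrec, ← Ico_add_one_right_eq_Icc, sum_Ico_eq_sum_range]
  simp [add_comm 1, mul_assoc]

section

variable (hrec : ∀ m, b (m + 1)
  = ∑ x ∈ range (m + 1), (m.descFactorial x : A) * (c (x + 1) * b (m - x)))
include hrec

theorem succ_mul_eq_sum_range (hc0 : c 0 = 1) (m : ℕ) :
    (m + 1 : A) * b m = ∑ x ∈ range (m + 1), (m.descFactorial x : A) * (c x * b (m - x)) := by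
  cases m with
  | zero => simp [hc0]
  | succ m =>
    simp only [sum_range_succ', Nat.succ_descFactorial_succ, Nat.cast_mul, mul_assoc,
      ← mul_sum, Nat.add_sub_add_right, ← hrec, hc0, Nat.descFactorial_zero]
    push_cast
    ring

theorem turanDefect_eq_sum (hc0 : c 0 = 1) {m n N : ℕ} (hm : m < N) (hn : n < N) :
    turanDefect b m n = ∑ x ∈ range N, ∑ y ∈ range N,
      (c (x + 1) * c y - c x * c (y + 1)) * crossTerm b m n x y := by
  have h₁ := hrec m
  have h₂ := succ_mul_eq_sum_range hrec hc0 n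
  have h₃ := succ_mul_eq_sum_range hrec hc0 m
  have h₄ := hrec n
  rw [← sum_range_descFactorial_mul_of_lt hm] at h₁ h₃
  rw [← sum_range_descFactorial_mul_of_lt hn] at h₂ h₄
  calc turanDefect b m n
      = b (m + 1) * ((n + 1 : A) * b n) - (m + 1 : A) * b m * b (n + 1) := by
        rw [turanDefect]; ring
    _ = _ := by
        rw [h₁, h₂, h₃, h₄, sum_mul_sum, sum_mul_sum, ← sum_sub_distrib]
        refine sum_congr rfl fun x _ => ?_
        rw [← sum_sub_distrib]
        refine sum_congr rfl fun y _ => ?_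
        rw [crossTerm]
        ring

theorem mem_of_recursion (hb0 : b 0 = 1) (hcR : ∀ j, c (j + 1) ∈ R) (k : ℕ) : b k ∈ R := by
  induction k using Nat.strong_induction_on with
  | _ k ih =>
    cases k with
    | zero => exact hb0 ▸ R.one_mem
    | succ m =>
      rw [hrec]
      exact sum_mem fun x hx => mul_mem (natCast_mem R _)
        (mul_mem (hcR x) (ih _ (by have := mem_range.1 hx; omega)))

theorem turanDefect_mem (hc0 : c 0 = 1) (hb0 : b 0 = 1) (hcR : ∀ j, c (j + 1) ∈ R)
    (hcD : ∀ x y, x < y → c (x + 1) * c y - c x * c (y + 1) ∈ R)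
    {m n : ℕ} (hmn : m ≤ n) : turanDefect b m n ∈ R := by
  induction hs : m + n using Nat.strong_induction_on generalizing m n with
  | _ s ih =>
    subst hs
    rw [turanDefect_eq_sum hrec hc0 (Nat.lt_succ_of_le hmn) n.lt_succ_self,
      sum_range_sum_range_eq_sum_pairs _ (fun x => by ring)]
    refine sum_mem fun y hy => sum_mem fun x hx => ?_
    have hxy := mem_range.1 hx
    rw [show (c (x + 1) * c y - c x * c (y + 1)) * crossTerm b m n x y
        + (c (y + 1) * c x - c y * c (x + 1)) * crossTerm b m n y x
        = (c (x + 1) * c y - c x * c (y + 1)) * (crossTerm b m n x y - crossTerm b m n y x) by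
      ring]
    exact mul_mem (hcD x y hxy) (crossTerm_sub_crossTerm_swap_mem
      (fun p q hpq hpq' => ih (p + q) hpq' hpq rfl) (mem_of_recursion hrec hb0 hcR) hmn hxy
      (Nat.lt_succ_iff.1 (mem_range.1 hy)))

end

end

open MvPolynomial

theorem stmt8_general (c b : ℕ → MvPolynomial ℕ ℤ)
    (hc0 : c 0 = 1)
    (hb0 : b 0 = 1)
    (hbrec : ∀ m : ℕ, b (m + 1)
      = ∑ j ∈ Finset.Icc 1 (m + 1),
          (Nat.descFactorial m (j - 1) : MvPolynomial ℕ ℤ) * c j * b (m + 1 - j)) :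
    ∀ m n : ℕ, 1 ≤ m → m ≤ n →
      ((n : MvPolynomial ℕ ℤ) + 1) * b m * b n - (m : MvPolynomial ℕ ℤ) * b (m - 1) * b (n + 1)
        ∈ Subsemiring.closure
            ({p : MvPolynomial ℕ ℤ | ∃ j : ℕ, 1 ≤ j ∧ p = c j} ∪
             {p : MvPolynomial ℕ ℤ | ∃ j k : ℕ, 0 < j ∧ j ≤ k ∧
                p = c j * c k - c (j - 1) * c (k + 1)}) := by
  intro m n hm hmn
  obtain ⟨m, rfl⟩ := Nat.exists_eq_add_of_le' hm
  rw [Nat.add_sub_cancel, Nat.cast_add_one]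
  exact turanDefect_mem (succ_eq_sum_range_of_sum_Icc hbrec) hc0 hb0
    (fun j => Subsemiring.subset_closure (Or.inl ⟨j + 1, by omega, rfl⟩))
    (fun x y hxy => Subsemiring.subset_closure (Or.inr ⟨x + 1, y, by omega, hxy, by simp⟩))
    (show m ≤ n by omega)

/-- in `ℤ[c₁, c₂, …]`, with `(b k)` the cycle-index polynomials given
by the falling-factorial recursion, for all `1 ≤ m ≤ n` the element
`(n+1) bₘ bₙ - m b_{m-1} b_{n+1}` lies in the subsemiring `ℕ[𝒴]` generated by
`𝒴 = {c₁, c₂, …} ∪ {cⱼ c_k - c_{j-1} c_{k+1} : 0 < j ≤ k}` (with `c₀ = 1`). -/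
theorem stmt8 (c b : ℕ → MvPolynomial ℕ ℤ)
    (hc0 : c 0 = 1)
    (hc : ∀ j : ℕ, 1 ≤ j → c j = X j)
    (hb0 : b 0 = 1)
    (hbrec : ∀ m : ℕ, b (m + 1)
      = ∑ j ∈ Finset.Icc 1 (m + 1),
          (Nat.descFactorial m (j - 1) : MvPolynomial ℕ ℤ) * c j * b (m + 1 - j)) :
    ∀ m n : ℕ, 1 ≤ m → m ≤ n →
      ((n : MvPolynomial ℕ ℤ) + 1) * b m * b n - (m : MvPolynomial ℕ ℤ) * b (m - 1) * b (n + 1)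
        ∈ Subsemiring.closure
            ({p : MvPolynomial ℕ ℤ | ∃ j : ℕ, 1 ≤ j ∧ p = c j} ∪
             {p : MvPolynomial ℕ ℤ | ∃ j k : ℕ, 0 < j ∧ j ≤ k ∧
                p = c j * c k - c (j - 1) * c (k + 1)}) :=
  stmt8_general c b hc0 hb0 hbrec
end

section
/- Let R be a commutative ring, let (c_k)_{k≥0} be elements of R with c_0 = 1, and define (b_k)_{k≥0} by b_0 = 1 and b_{m+1} = Σ_{j=1}^{m+1} (m)_{j−1}·c_j·b_{m+1−j}. Then for every m ≥ 0 the companion identity (m+1)·b_m = Σ_{j=1}^{m+1} (m)_{j−1}·c_{j−1}·b_{m+1−j} holds. -/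
/-! Peel off the `j = 1` term, which is `b (m + 1)` because `c 0 = 1`. In the remaining terms
`(m + 1)_(j-1) = (m + 1) · (m)_(j-2)`, so they add up to `(m + 1)` times the right-hand side
of the recursion for `b (m + 1)`. -/

open Finset

theorem Finset.sum_Icc_one_eq_sum_range {M : Type*} [AddCommMonoid M] (n : ℕ) (g : ℕ → M) :
    ∑ j ∈ Icc 1 n, g j = ∑ i ∈ range n, g (i + 1) := by
  rw [← Ico_add_one_right_eq_Icc, sum_Ico_eq_sum_range, Nat.add_sub_cancel]
  simp only [add_comm 1]

theorem Finset.sum_descFactorial_succ_succ_mul {R : Type*} [CommSemiring R] (s : Finset ℕ)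
    (m : ℕ) (f : ℕ → R) :
    ∑ i ∈ s, ((m + 1).descFactorial (i + 1) : R) * f i =
      (m + 1) * ∑ i ∈ s, (m.descFactorial i : R) * f i := by
  rw [mul_sum]
  refine sum_congr rfl fun i _ => ?_
  rw [Nat.succ_descFactorial_succ]
  push_cast
  ring

theorem stmt10_general {R : Type*} [CommRing R] (c b : ℕ → R)
    (hc0 : c 0 = 1)
    (hbrec : ∀ m : ℕ, b (m + 1)
      = ∑ j ∈ Finset.Icc 1 (m + 1),
          (Nat.descFactorial m (j - 1) : R) * c j * b (m + 1 - j)) :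
    ∀ m : ℕ, ((m : R) + 1) * b m
      = ∑ j ∈ Finset.Icc 1 (m + 1),
          (Nat.descFactorial m (j - 1) : R) * c (j - 1) * b (m + 1 - j) := by
  rintro (_ | m)
  · simp [hc0]
  have hrec :
      b (m + 1) = ∑ i ∈ range (m + 1), (m.descFactorial i : R) * (c (i + 1) * b (m - i)) := by
    rw [hbrec, sum_Icc_one_eq_sum_range]
    simp only [Nat.add_sub_cancel, Nat.add_sub_add_right, mul_assoc]
  rw [sum_Icc_one_eq_sum_range, sum_range_succ']
  simp only [Nat.add_sub_cancel, Nat.add_sub_add_right, mul_assoc, sum_descFactorial_succ_succ_mul,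
    ← hrec, Nat.descFactorial_zero, hc0]
  push_cast
  ring

/-- in a commutative ring `R`, if `c 0 = 1` and `(b k)` satisfies the
falling-factorial recursion `b (m+1) = ∑_{j=1}^{m+1} (m)_{j-1} cⱼ b_{m+1-j}` with
`b 0 = 1`, then the companion identity
`(m+1) bₘ = ∑_{j=1}^{m+1} (m)_{j-1} c_{j-1} b_{m+1-j}` holds for every `m ≥ 0`. -/
theorem stmt10 {R : Type*} [CommRing R] (c b : ℕ → R)
    (hc0 : c 0 = 1)
    (hb0 : b 0 = 1)
    (hbrec : ∀ m : ℕ, b (m + 1)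
      = ∑ j ∈ Finset.Icc 1 (m + 1),
          (Nat.descFactorial m (j - 1) : R) * c j * b (m + 1 - j)) :
    ∀ m : ℕ, ((m : R) + 1) * b m
      = ∑ j ∈ Finset.Icc 1 (m + 1),
          (Nat.descFactorial m (j - 1) : R) * c (j - 1) * b (m + 1 - j) :=
  stmt10_general c b hc0 hbrec
end

section
/- Let R be a commutative ring, let (x_k)_{k≥0} and (y_k)_{k≥0} be sequences in R, and let D_n = Σ_{k=0}^n x_k·y_{n−k}. Then for all integers 1 ≤ m ≤ n: D_m·D_n − D_{m−1}·D_{n+1} = x_0·y_0·x_m·y_n + y_0·Σ_{k=0}^{n−m−1} x_m·x_{k+1}·y_{n−1−k} + y_0·Σ_{k=0}^{m−1} y_k·(x_m·x_{n−k} − x_{n+1}·x_{m−k−1}) + Σ_{k=0}^{m−1} Σ_{ℓ=0}^{n−m} x_k·x_ℓ·(y_{m−k}·y_{n−ℓ} − y_{m−k−1}·y_{n+1−ℓ}) + Σ_{k=0}^{m−1} Σ_{ℓ=0}^{k} (x_k·x_{n−m+1+ℓ} − x_ℓ·x_{n−m+1+k})·(y_{m−k}·y_{m−1−ℓ} − y_{m−1−k}·y_{m−ℓ}).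 -/
/-!
Split off the last terms `x m * y 0` of `D m` and `x (n + 1) * y 0` of `D (n + 1)`. What multiplies
`y 0` is `x m * D n - x (n + 1) * D (m - 1)`, and reading both convolutions backwards gives the three
`y 0`-terms. The rest is a double sum over `i < m`, `j ≤ n`; its part with `j > n - m` is a sum over
an `m × m` square of `a k l * (c k l - c l k)`, which folds onto the triangle `l ≤ k` as
`(a k l - a l k) * (c k l - c l k)`.
-/

open Finset

theorem sum_range_succ_eq_add_sum_range_shift {M : Type*} [AddCommMonoid M] (f : ℕ → M)
    {m n : ℕ} (hmn : m ≤ n) :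
    ∑ j ∈ range (n + 1), f j = ∑ j ∈ range (n - m + 1), f j + ∑ l ∈ range m, f (n - m + 1 + l) := by
  rw [show n + 1 = n - m + 1 + m by omega, sum_range_add]

theorem sum_square_eq_sum_triangle_of_diag_eq_zero {M : Type*} [AddCommMonoid M]
    (F : ℕ → ℕ → M) (hF : ∀ k, F k k = 0) (m : ℕ) :
    ∑ i ∈ range m, ∑ j ∈ range m, F i j = ∑ k ∈ range m, ∑ l ∈ range (k + 1), (F k l + F l k) := by
  induction m with
  | zero => simp
  | succ m ih =>
    simp only [sum_range_succ, sum_add_distrib, hF, add_zero] at ih ⊢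
    rw [ih]
    abel

theorem sum_square_mul_sub_swap {R : Type*} [CommRing R] (a c : ℕ → ℕ → R) (m : ℕ) :
    ∑ i ∈ range m, ∑ j ∈ range m, a i j * (c i j - c j i)
      = ∑ k ∈ range m, ∑ l ∈ range (k + 1), (a k l - a l k) * (c k l - c l k) := by
  rw [sum_square_eq_sum_triangle_of_diag_eq_zero _ (fun k => by simp)]
  exact sum_congr rfl fun k _ => sum_congr rfl fun l _ => by ring

section Convolution

variable {R : Type*} [CommRing R] (x y : ℕ → R)

def cauchyConv (n : ℕ) : R := ∑ k ∈ range (n + 1), x k * y (n - k)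

theorem cauchyConv_comm (n : ℕ) : cauchyConv x y n = cauchyConv y x n := by
  rw [cauchyConv, cauchyConv, ← Nat.sum_antidiagonal_eq_sum_range_succ (fun i j => x i * y j),
    ← Nat.sum_antidiagonal_eq_sum_range_succ (fun i j => y i * x j),
    ← Nat.sum_antidiagonal_swap]
  simp [mul_comm]

theorem cauchyConv_eq_sum_range_add (n : ℕ) :
    cauchyConv x y n = ∑ k ∈ range n, x k * y (n - k) + x n * y 0 := by
  rw [cauchyConv, sum_range_succ, Nat.sub_self]

theorem cauchyConv_pred {m : ℕ} (hm : 1 ≤ m) :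
    cauchyConv x y (m - 1) = ∑ k ∈ range m, y k * x (m - k - 1) := by
  rw [cauchyConv_comm, cauchyConv, Nat.sub_add_cancel hm]
  exact sum_congr rfl fun k _ => by rw [Nat.sub_right_comm]

theorem cauchyConv_eq_head_add_sum_add_sum {m n : ℕ} (hmn : m ≤ n) :
    cauchyConv x y n = x 0 * y n + ∑ k ∈ range (n - m), x (k + 1) * y (n - 1 - k)
      + ∑ k ∈ range m, y k * x (n - k) := by
  rw [cauchyConv, sum_range_succ_eq_add_sum_range_shift _ hmn, sum_range_succ',
    ← sum_range_reflect (fun k => y k * x (n - k)) m, Nat.sub_zero, add_comm (x 0 * y n)]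
  congr 1
  · exact congrArg (· + _) (sum_congr rfl fun k _ => by rw [Nat.sub_sub, add_comm 1 k])
  · refine sum_congr rfl fun l hl => ?_
    rw [mem_range] at hl
    rw [mul_comm, show n - (m - 1 - l) = n - m + 1 + l by omega,
      show n - (n - m + 1 + l) = m - 1 - l by omega]

theorem cauchyConv_mul_sub_pred_mul_succ {m : ℕ} (hm : 1 ≤ m) (n : ℕ) :
    cauchyConv x y m * cauchyConv x y n - cauchyConv x y (m - 1) * cauchyConv x y (n + 1)
      = ∑ i ∈ range m, ∑ j ∈ range (n + 1),
          x i * x j * (y (m - i) * y (n - j) - y (m - i - 1) * y (n + 1 - j))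
        + y 0 * (x m * cauchyConv x y n - x (n + 1) * cauchyConv x y (m - 1)) := by
  have hcross : (∑ i ∈ range m, x i * y (m - i)) * cauchyConv x y n
      - cauchyConv x y (m - 1) * ∑ j ∈ range (n + 1), x j * y (n + 1 - j)
      = ∑ i ∈ range m, ∑ j ∈ range (n + 1),
          x i * x j * (y (m - i) * y (n - j) - y (m - i - 1) * y (n + 1 - j)) := by
    rw [cauchyConv, cauchyConv, Nat.sub_add_cancel hm, sum_mul_sum, sum_mul_sum,
      ← sum_sub_distrib]
    refine sum_congr rfl fun i _ => ?_
    rw [← sum_sub_distrib]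
    exact sum_congr rfl fun j _ => by rw [Nat.sub_right_comm]; ring
  rw [cauchyConv_eq_sum_range_add x y m, cauchyConv_eq_sum_range_add x y (n + 1), ← hcross]
  ring

theorem sum_rectangle_eq_add_sum_triangle {m n : ℕ} (hmn : m ≤ n) :
    ∑ i ∈ range m, ∑ j ∈ range (n + 1),
        x i * x j * (y (m - i) * y (n - j) - y (m - i - 1) * y (n + 1 - j))
      = ∑ i ∈ range m, ∑ j ∈ range (n - m + 1),
          x i * x j * (y (m - i) * y (n - j) - y (m - i - 1) * y (n + 1 - j))
        + ∑ k ∈ range m, ∑ l ∈ range (k + 1),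
          (x k * x (n - m + 1 + l) - x l * x (n - m + 1 + k))
            * (y (m - k) * y (m - 1 - l) - y (m - 1 - k) * y (m - l)) := by
  have htri := sum_square_mul_sub_swap (fun k l => x k * x (n - m + 1 + l))
    (fun k l => y (m - k) * y (m - 1 - l)) m
  simp only [mul_comm (y (m - 1 - _)) (y (m - _))] at htri ⊢
  rw [← htri]
  simp only [sum_range_succ_eq_add_sum_range_shift _ hmn, sum_add_distrib]
  congr 1
  refine sum_congr rfl fun i _ => sum_congr rfl fun l hl => ?_
  rw [mem_range] at hl
  rw [show n - (n - m + 1 + l) = m - 1 - l by omega, show n + 1 - (n - m + 1 + l) = m - l by omega,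
    Nat.sub_right_comm m i 1]
  ring

end Convolution

/-- in a commutative ring, with `D n = ∑_{k=0}^n x_k y_{n-k}` the Cauchy
convolution of `(x k)` and `(y k)`, for all `1 ≤ m ≤ n` the identity of
Lemma (Schirmacher / Matsui) expressing `Dₘ Dₙ - D_{m-1} D_{n+1}` holds. -/
theorem stmt13 {R : Type*} [CommRing R] (x y : ℕ → R) (D : ℕ → R)
    (hD : ∀ n : ℕ, D n = ∑ k ∈ Finset.range (n + 1), x k * y (n - k)) :
    ∀ m n : ℕ, 1 ≤ m → m ≤ n →
      D m * D n - D (m - 1) * D (n + 1)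
        = x 0 * y 0 * x m * y n
          + y 0 * ∑ k ∈ Finset.range (n - m), x m * x (k + 1) * y (n - 1 - k)
          + y 0 * ∑ k ∈ Finset.range m, y k * (x m * x (n - k) - x (n + 1) * x (m - k - 1))
          + ∑ k ∈ Finset.range m, ∑ l ∈ Finset.range (n - m + 1),
              x k * x l * (y (m - k) * y (n - l) - y (m - k - 1) * y (n + 1 - l))
          + ∑ k ∈ Finset.range m, ∑ l ∈ Finset.range (k + 1),
              (x k * x (n - m + 1 + l) - x l * x (n - m + 1 + k))
                * (y (m - k) * y (m - 1 - l) - y (m - 1 - k) * y (m - l)) := by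
  intro m n hm hmn
  obtain rfl : D = cauchyConv x y := funext hD
  have hmiddle : ∑ k ∈ range (n - m), x m * x (k + 1) * y (n - 1 - k)
      = x m * ∑ k ∈ range (n - m), x (k + 1) * y (n - 1 - k) := by
    simp only [mul_sum, mul_assoc]
  have htail : ∑ k ∈ range m, y k * (x m * x (n - k) - x (n + 1) * x (m - k - 1))
      = x m * ∑ k ∈ range m, y k * x (n - k) - x (n + 1) * ∑ k ∈ range m, y k * x (m - k - 1) := by
    rw [mul_sum, mul_sum, ← sum_sub_distrib]
    exact sum_congr rfl fun k _ => by ring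
  rw [cauchyConv_mul_sub_pred_mul_succ x y hm, sum_rectangle_eq_add_sum_triangle x y hmn,
    cauchyConv_eq_head_add_sum_add_sum x y hmn, cauchyConv_pred x y hm, hmiddle, htail]
  ring
end

section
/- Work in the polynomial ring over ℤ in indeterminates x_0, x_1, … and y_0, y_1, …, and let D_n = Σ_{k=0}^n x_k·y_{n−k}. Let 𝒢 = {x_0, x_1, …} ∪ {x_m·x_n − x_{m−1}·x_{n+1} : 1 ≤ m ≤ n} and ℱ = {y_0, y_1, …} ∪ {y_m·y_n − y_{m−1}·y_{n+1} : 1 ≤ m ≤ n}. Then for all 1 ≤ m ≤ n, D_m·D_n − D_{m−1}·D_{n+1} lies in ℕ[𝒢 ∪ ℱ], i.e., it can be written as a polynomial in elements of 𝒢 ∪ ℱ with nonnegative integer coefficients. -/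
/-!
Extend `x` and `y` by zero to negative indices. Then `D_m D_n - D_{m-1} D_{n+1}` is a `2 × 2` minor of
a product of two Toeplitz matrices, and the Cauchy–Binet formula writes it as
`∑_{i<j} (x_i x_{j-1} - x_j x_{i-1}) (y_{m-i} y_{n+1-j} - y_{m-j} y_{n+1-i})`.
Every factor has the shape `f_a f_b - f_c f_d` with `a + b = c + d` and `c ≤ a, b`: if `c < 0` it is a
product of two generators, otherwise it telescopes into a sum of generators `f_i f_j - f_{i-1} f_{j+1}`.
-/

open Finset

noncomputable def zeroExt {M : Type*} [Zero M] (f : ℕ → M) : ℤ → M :=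
  Function.extend ((↑) : ℕ → ℤ) f fun _ => 0

section zeroExt

variable {M : Type*} [Zero M] (f : ℕ → M)

@[simp]
theorem zeroExt_natCast (i : ℕ) : zeroExt f i = f i :=
  Nat.cast_injective.extend_apply f _ i

theorem zeroExt_of_neg {i : ℤ} (hi : i < 0) : zeroExt f i = 0 :=
  Function.extend_apply' f _ i fun ⟨k, hk⟩ => by omega

end zeroExt

section CommRing

variable {R : Type*} [CommRing R]

theorem sum_mul_sum_sub_sum_mul_sum_eq_sum_minors (a b c d : ℕ → R) (N : ℕ) :
    (∑ i ∈ range N, a i * b i) * (∑ j ∈ range N, c j * d j)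
        - (∑ i ∈ range N, a i * d i) * (∑ j ∈ range N, c j * b j)
      = ∑ j ∈ range N, ∑ i ∈ range j, (a i * c j - a j * c i) * (b i * d j - b j * d i) := by
  induction N with
  | zero => simp
  | succ N ih =>
    have new_column : ∑ i ∈ range N, (a i * c N - a N * c i) * (b i * d N - b N * d i)
        = (∑ i ∈ range N, a i * b i) * (c N * d N) - (∑ i ∈ range N, a i * d i) * (c N * b N)
          - a N * d N * (∑ i ∈ range N, c i * b i) + a N * b N * (∑ i ∈ range N, c i * d i) := by
      simp only [sum_mul, mul_sum, ← sum_sub_distrib, ← sum_add_distrib]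
      exact sum_congr rfl fun i _ => by ring
    simp only [sum_range_succ _ N]
    rw [← ih, new_column]
    ring

theorem mul_sub_mul_mem_of_add_eq {S : Subsemiring R} {f : ℕ → R}
    (hf : ∀ i j, 1 ≤ i → i ≤ j → f i * f j - f (i - 1) * f (j + 1) ∈ S)
    {a b c d : ℕ} (h : a + b = c + d) (hca : c ≤ a) (hcb : c ≤ b) :
    f a * f b - f c * f d ∈ S := by
  wlog hab : a ≤ b generalizing a b
  · simpa only [mul_comm (f b)] using this (b := a) (by omega) hcb hca (by omega)
  have telescope := sum_range_sub' (fun t => f (a - t) * f (b + t)) (a - c)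
  rw [show a - (a - c) = c by omega, show b + (a - c) = d by omega, Nat.sub_zero,
    Nat.add_zero] at telescope
  rw [← telescope]
  refine sum_mem fun t ht => ?_
  have ht : t < a - c := mem_range.mp ht
  simpa only [show a - (t + 1) = a - t - 1 by omega, ← add_assoc] using
    hf (a - t) (b + t) (by omega) (by omega)

theorem zeroExt_mem {S : Subsemiring R} {f : ℕ → R} (hS : ∀ i, f i ∈ S) (i : ℤ) :
    zeroExt f i ∈ S := by
  rcases lt_or_ge i 0 with hi | hi
  · simpa only [zeroExt_of_neg f hi] using S.zero_mem
  · lift i to ℕ using hi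
    simpa only [zeroExt_natCast] using hS i

theorem zeroExt_mul_sub_mul_mem_of_add_eq {S : Subsemiring R} {f : ℕ → R} (hS : ∀ i, f i ∈ S)
    (hf : ∀ i j, 1 ≤ i → i ≤ j → f i * f j - f (i - 1) * f (j + 1) ∈ S)
    {a b c d : ℤ} (h : a + b = c + d) (hca : c ≤ a) (hcb : c ≤ b) :
    zeroExt f a * zeroExt f b - zeroExt f c * zeroExt f d ∈ S := by
  rcases lt_or_ge c 0 with hc | hc
  · rw [zeroExt_of_neg f hc, zero_mul, sub_zero]
    exact mul_mem (zeroExt_mem hS a) (zeroExt_mem hS b)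
  · lift c to ℕ using hc
    lift a to ℕ using (by omega)
    lift b to ℕ using (by omega)
    lift d to ℕ using (by omega)
    simp only [zeroExt_natCast]
    exact mul_sub_mul_mem_of_add_eq hf (by omega) (by omega) (by omega)

theorem sum_range_zeroExt_mul_zeroExt (x y : ℕ → R) {p N : ℕ} (h : p < N) :
    ∑ k ∈ range N, zeroExt x k * zeroExt y (p - k) = ∑ k ∈ range (p + 1), x k * y (p - k) := by
  rw [← sum_subset (range_subset_range.2 h)]
  · refine sum_congr rfl fun k hk => ?_
    rw [show (p : ℤ) - k = ((p - k : ℕ) : ℤ) by have := mem_range.1 hk; omega]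
    simp only [zeroExt_natCast]
  · intro k _ hk
    rw [zeroExt_of_neg y (by have := mem_range.not.1 hk; omega), mul_zero]

theorem sum_range_succ_zeroExt_sub_one_mul_zeroExt (x y : ℕ → R) {p N : ℕ} (h : p < N) :
    ∑ k ∈ range (N + 1), zeroExt x (k - 1) * zeroExt y (p + 1 - k)
      = ∑ k ∈ range (p + 1), x k * y (p - k) := by
  rw [sum_range_succ', Nat.cast_zero, zero_sub, zeroExt_of_neg x (by norm_num), zero_mul,
    add_zero, ← sum_range_zeroExt_mul_zeroExt x y h]
  push_cast
  simp only [add_sub_cancel_right, add_sub_add_right_eq_sub]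

theorem mul_sub_mul_mem_of_convolution {S : Subsemiring R} {x y D : ℕ → R}
    (hD : ∀ n, D n = ∑ k ∈ range (n + 1), x k * y (n - k))
    (hx : ∀ i, x i ∈ S) (hy : ∀ i, y i ∈ S)
    (hx_gen : ∀ i j, 1 ≤ i → i ≤ j → x i * x j - x (i - 1) * x (j + 1) ∈ S)
    (hy_gen : ∀ i j, 1 ≤ i → i ≤ j → y i * y j - y (i - 1) * y (j + 1) ∈ S)
    {m n : ℕ} (hm : 1 ≤ m) (hmn : m ≤ n) :
    D m * D n - D (m - 1) * D (n + 1) ∈ S := by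
  have hDm : D m = ∑ k ∈ range (n + 2), zeroExt x k * zeroExt y (m - k) := by
    rw [hD, sum_range_zeroExt_mul_zeroExt x y (by omega)]
  have hDn : D n = ∑ k ∈ range (n + 2), zeroExt x (k - 1) * zeroExt y (n + 1 - k) := by
    rw [hD, sum_range_succ_zeroExt_sub_one_mul_zeroExt x y (Nat.lt_succ_self n)]
  have hDm_pred : D (m - 1) = ∑ k ∈ range (n + 2), zeroExt x (k - 1) * zeroExt y (m - k) := by
    rw [hD, ← sum_range_succ_zeroExt_sub_one_mul_zeroExt x y (show m - 1 < n + 1 by omega),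
      Nat.cast_sub hm, Nat.cast_one, sub_add_cancel]
  have hDn_succ : D (n + 1) = ∑ k ∈ range (n + 2), zeroExt x k * zeroExt y (n + 1 - k) := by
    rw [hD, ← sum_range_zeroExt_mul_zeroExt x y (Nat.lt_succ_self (n + 1)), Nat.cast_succ]
  rw [mul_comm (D (m - 1)), hDm, hDn, hDm_pred, hDn_succ,
    sum_mul_sum_sub_sum_mul_sum_eq_sum_minors]
  refine sum_mem fun j _ => sum_mem fun i hi => ?_
  have hij : i < j := mem_range.1 hi
  refine mul_mem ?_ ?_
  · rw [mul_comm (zeroExt x j)]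
    exact zeroExt_mul_sub_mul_mem_of_add_eq hx hx_gen (by ring) (by omega) (by omega)
  · exact zeroExt_mul_sub_mul_mem_of_add_eq hy hy_gen (by ring) (by omega) (by omega)

end CommRing

open MvPolynomial

theorem stmt14_general (x y : ℕ → MvPolynomial (ℕ ⊕ ℕ) ℤ)
    (D : ℕ → MvPolynomial (ℕ ⊕ ℕ) ℤ)
    (hD : ∀ n : ℕ, D n = ∑ k ∈ Finset.range (n + 1), x k * y (n - k)) :
    ∀ m n : ℕ, 1 ≤ m → m ≤ n →
      D m * D n - D (m - 1) * D (n + 1)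
        ∈ Subsemiring.closure
            (({p : MvPolynomial (ℕ ⊕ ℕ) ℤ | ∃ i : ℕ, p = x i} ∪
              {p : MvPolynomial (ℕ ⊕ ℕ) ℤ | ∃ i j : ℕ, 1 ≤ i ∧ i ≤ j ∧
                 p = x i * x j - x (i - 1) * x (j + 1)}) ∪
             ({p : MvPolynomial (ℕ ⊕ ℕ) ℤ | ∃ i : ℕ, p = y i} ∪
              {p : MvPolynomial (ℕ ⊕ ℕ) ℤ | ∃ i j : ℕ, 1 ≤ i ∧ i ≤ j ∧
                 p = y i * y j - y (i - 1) * y (j + 1)})) := by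
  intro m n hm hmn
  refine mul_sub_mul_mem_of_convolution hD (fun i => Subsemiring.subset_closure ?_)
    (fun i => Subsemiring.subset_closure ?_) (fun i j hi hij => Subsemiring.subset_closure ?_)
    (fun i j hi hij => Subsemiring.subset_closure ?_) hm hmn
  exacts [Or.inl (Or.inl ⟨i, rfl⟩), Or.inr (Or.inl ⟨i, rfl⟩),
    Or.inl (Or.inr ⟨i, j, hi, hij, rfl⟩), Or.inr (Or.inr ⟨i, j, hi, hij, rfl⟩)]

/-- in `ℤ[x₀, x₁, …, y₀, y₁, …]`, with `D n = ∑_{k=0}^n x_k y_{n-k}`,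
for all `1 ≤ m ≤ n` the element `Dₘ Dₙ - D_{m-1} D_{n+1}` lies in `ℕ[𝒢 ∪ ℱ]`, where
`𝒢 = {x₀, x₁, …} ∪ {xₘ xₙ - x_{m-1} x_{n+1} : 1 ≤ m ≤ n}` and
`ℱ = {y₀, y₁, …} ∪ {yₘ yₙ - y_{m-1} y_{n+1} : 1 ≤ m ≤ n}`. -/
theorem stmt14 (x y : ℕ → MvPolynomial (ℕ ⊕ ℕ) ℤ)
    (hx : ∀ i : ℕ, x i = X (Sum.inl i))
    (hy : ∀ i : ℕ, y i = X (Sum.inr i))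
    (D : ℕ → MvPolynomial (ℕ ⊕ ℕ) ℤ)
    (hD : ∀ n : ℕ, D n = ∑ k ∈ Finset.range (n + 1), x k * y (n - k)) :
    ∀ m n : ℕ, 1 ≤ m → m ≤ n →
      D m * D n - D (m - 1) * D (n + 1)
        ∈ Subsemiring.closure
            (({p : MvPolynomial (ℕ ⊕ ℕ) ℤ | ∃ i : ℕ, p = x i} ∪
              {p : MvPolynomial (ℕ ⊕ ℕ) ℤ | ∃ i j : ℕ, 1 ≤ i ∧ i ≤ j ∧
                 p = x i * x j - x (i - 1) * x (j + 1)}) ∪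
             ({p : MvPolynomial (ℕ ⊕ ℕ) ℤ | ∃ i : ℕ, p = y i} ∪
              {p : MvPolynomial (ℕ ⊕ ℕ) ℤ | ∃ i j : ℕ, 1 ≤ i ∧ i ≤ j ∧
                 p = y i * y j - y (i - 1) * y (j + 1)})) :=
  stmt14_general x y D hD
end

section
/- (Hansen's first identity.) Let (r_k)_{k≥0} and (P_n)_{n≥0} be real sequences satisfying (n+1)·P_{n+1} = Σ_{k=0}^n r_k·P_{n−k} for all n ≥ 0, with the convention P_{−1} = 0. Then for every m ≥ 0: m·(m+2)·(P_{m+1}² − P_m·P_{m+2}) = P_{m+1}·(r_0·P_m − P_{m+1}) + Σ_{ℓ=0}^m Σ_{k=0}^ℓ (P_{m−ℓ}·P_{m−k−1} − P_{m−k}·P_{m−ℓ−1})·(r_{k+1}·r_ℓ − r_{ℓ+1}·r_k). -/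
/-!
Write `x_k = P_{m-k}` and `y_k = P_{m-k-1}`. The summand on the right is symmetric in `(k, l)`,
of the form `g k l + g l k` with `g k k = 0`, so the triangular double sum is the full square sum
of `g`, which factors as `(∑ r_{k+1} y_k)(∑ r_k x_k) - (∑ r_k y_k)(∑ r_{k+1} x_k)`. Each of these
single sums is the recursion at `m - 1`, `m` or `m + 1`, after splitting off its first term or
appending a last term that vanishes because `P_{-1} = 0`; what remains is a polynomial identity
in `P_m, P_{m+1}, P_{m+2}, r_0`.
-/

open Finset

lemma sum_range_triangle_add_swap {M : Type*} [AddCommMonoid M] (N : ℕ) (f : ℕ → ℕ → M)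
    (hf : ∀ k, f k k = 0) :
    ∑ l ∈ range N, ∑ k ∈ range (l + 1), (f k l + f l k) = ∑ l ∈ range N, ∑ k ∈ range N, f k l := by
  induction N with
  | zero => simp
  | succ n ih =>
    rw [sum_range_succ, ih]
    simp only [sum_range_succ, sum_add_distrib, hf, add_zero]
    abel

lemma sum_range_triangle_cross_mul_cross {R : Type*} [CommRing R] (N : ℕ) (a b x y : ℕ → R) :
    ∑ l ∈ range N, ∑ k ∈ range (l + 1), (x l * y k - x k * y l) * (b k * a l - b l * a k)
      = (∑ k ∈ range N, b k * y k) * (∑ k ∈ range N, a k * x k)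
        - (∑ k ∈ range N, a k * y k) * (∑ k ∈ range N, b k * x k) := by
  simp only [sum_mul_sum, ← sum_sub_distrib]
  rw [sum_comm, ← sum_range_triangle_add_swap N (fun k l => b k * y k * (a l * x l) - a k * y k * (b l * x l))
      (fun k => by ring)]
  refine sum_congr rfl fun l _ => sum_congr rfl fun k _ => ?_
  ring

section HansenRecursion

variable {r : ℕ → ℝ} {P : ℤ → ℝ}

lemma sum_range_succ_succ_mul_eq (hPneg : P (-1) = 0)
    (hPrec : ∀ n : ℕ, ((n : ℝ) + 1) * P ((n : ℤ) + 1)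
      = ∑ k ∈ range (n + 1), r k * P ((n : ℤ) - (k : ℤ))) (n : ℕ) :
    ∑ k ∈ range (n + 2), r k * P ((n : ℤ) - (k : ℤ)) = ((n : ℝ) + 1) * P ((n : ℤ) + 1) := by
  rw [sum_range_succ, ← hPrec n]
  simp [hPneg]

lemma sum_range_mul_sub_one_eq (hPneg : P (-1) = 0)
    (hPrec : ∀ n : ℕ, ((n : ℝ) + 1) * P ((n : ℤ) + 1)
      = ∑ k ∈ range (n + 1), r k * P ((n : ℤ) - (k : ℤ))) (m : ℕ) :
    ∑ k ∈ range (m + 1), r k * P ((m : ℤ) - (k : ℤ) - 1) = (m : ℝ) * P (m : ℤ) := by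
  cases m with
  | zero => simp [hPneg]
  | succ n =>
    convert sum_range_succ_succ_mul_eq hPneg hPrec n using 1
    · refine sum_congr rfl fun k _ => ?_
      push_cast
      ring_nf
    · push_cast
      ring

lemma sum_range_succ_mul_sub_one_eq (hPneg : P (-1) = 0)
    (hPrec : ∀ n : ℕ, ((n : ℝ) + 1) * P ((n : ℤ) + 1)
      = ∑ k ∈ range (n + 1), r k * P ((n : ℤ) - (k : ℤ))) (m : ℕ) :
    ∑ k ∈ range (m + 1), r (k + 1) * P ((m : ℤ) - (k : ℤ) - 1)
      = ((m : ℝ) + 1) * P ((m : ℤ) + 1) - r 0 * P (m : ℤ) := by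
  rw [← sum_range_succ_succ_mul_eq hPneg hPrec m,
    sum_range_succ' (fun k => r k * P ((m : ℤ) - (k : ℤ))), Nat.cast_zero, sub_zero,
    add_sub_cancel_right]
  refine sum_congr rfl fun k _ => ?_
  push_cast
  ring_nf

lemma sum_range_succ_mul_eq
    (hPrec : ∀ n : ℕ, ((n : ℝ) + 1) * P ((n : ℤ) + 1)
      = ∑ k ∈ range (n + 1), r k * P ((n : ℤ) - (k : ℤ))) (m : ℕ) :
    ∑ k ∈ range (m + 1), r (k + 1) * P ((m : ℤ) - (k : ℤ))
      = ((m : ℝ) + 2) * P ((m : ℤ) + 2) - r 0 * P ((m : ℤ) + 1) := by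
  have h := hPrec (m + 1)
  rw [sum_range_succ'] at h
  push_cast at h
  ring_nf at h ⊢
  linarith

end HansenRecursion

/-- Hansen's first identity: with `P` indexed by `ℤ` so the convention
`P (-1) = 0` can be imposed, and `(n+1) P_{n+1} = ∑_{k=0}^n r_k P_{n-k}` for all `n ≥ 0`,
for every `m ≥ 0` one has
`m (m+2) (P_{m+1}² - Pₘ P_{m+2}) = P_{m+1} (r₀ Pₘ - P_{m+1})
  + ∑_{ℓ=0}^m ∑_{k=0}^ℓ (P_{m-ℓ} P_{m-k-1} - P_{m-k} P_{m-ℓ-1}) (r_{k+1} r_ℓ - r_{ℓ+1} r_k)`. -/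
theorem stmt16 (r : ℕ → ℝ) (P : ℤ → ℝ)
    (hPneg : P (-1) = 0)
    (hPrec : ∀ n : ℕ, ((n : ℝ) + 1) * P ((n : ℤ) + 1)
      = ∑ k ∈ Finset.range (n + 1), r k * P ((n : ℤ) - (k : ℤ))) :
    ∀ m : ℕ, (m : ℝ) * ((m : ℝ) + 2) * (P ((m : ℤ) + 1) ^ 2 - P (m : ℤ) * P ((m : ℤ) + 2))
      = P ((m : ℤ) + 1) * (r 0 * P (m : ℤ) - P ((m : ℤ) + 1))
        + ∑ l ∈ Finset.range (m + 1), ∑ k ∈ Finset.range (l + 1),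
            (P ((m : ℤ) - (l : ℤ)) * P ((m : ℤ) - (k : ℤ) - 1)
              - P ((m : ℤ) - (k : ℤ)) * P ((m : ℤ) - (l : ℤ) - 1))
            * (r (k + 1) * r l - r (l + 1) * r k) := by
  intro m
  rw [sum_range_triangle_cross_mul_cross (m + 1) r (fun k => r (k + 1))
    (fun k => P ((m : ℤ) - (k : ℤ))) (fun k => P ((m : ℤ) - (k : ℤ) - 1))]
  rw [sum_range_succ_mul_sub_one_eq hPneg hPrec, ← hPrec, sum_range_mul_sub_one_eq hPneg hPrec,
    sum_range_succ_mul_eq hPrec]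
  ring
end

section
/- (Hansen's second identity.) Let (r_k)_{k≥0} and (P_n)_{n≥0} be real sequences satisfying (n+1)·P_{n+1} = Σ_{k=0}^n r_k·P_{n−k} for all n ≥ 0. Then for every m ≥ 0: r_{m+1}·(m+2)·(P_{m+1}·P_{m+3} − P_{m+2}²) = P_{m+1}·(r_{m+2}·P_{m+2} − r_{m+1}·P_{m+3}) + Σ_{k=0}^m (P_{m−k}·P_{m+2} − P_{m+1}·P_{m−k+1})·(r_{m+2}·r_k − r_{k+1}·r_{m+1}). -/
/-!
Write `(a ⋆ b)ₙ = ∑_{i+j=n} aᵢ bⱼ`. Every sum over `k ≤ m` in the identity is a bilinear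
combination of the four convolutions `r ⋆ P`, `r' ⋆ P`, `r ⋆ P'`, `r' ⋆ P'` at index `m`,
where `'` shifts a sequence by one. Peeling off the first or last term of `r ⋆ P` at
`m + 1` and `m + 2` expresses the three shifted convolutions through `r ⋆ P`, which the
recursion identifies with `(n + 1) P_{n+1}`; the identity is then a polynomial identity.
-/

open Finset

namespace Hansen

variable {R : Type*} [CommRing R]

def conv (a b : ℕ → R) (n : ℕ) : R :=
  ∑ p ∈ antidiagonal n, a p.1 * b p.2

theorem conv_eq_sum_range (a b : ℕ → R) (n : ℕ) :
    conv a b n = ∑ k ∈ range (n + 1), a k * b (n - k) :=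
  Nat.sum_antidiagonal_eq_sum_range_succ_mk (fun p => a p.1 * b p.2) n

theorem conv_succ_left (a b : ℕ → R) (n : ℕ) :
    conv a b (n + 1) = a 0 * b (n + 1) + conv (fun k => a (k + 1)) b n :=
  Nat.sum_antidiagonal_succ

theorem conv_succ_right (a b : ℕ → R) (n : ℕ) :
    conv a b (n + 1) = a (n + 1) * b 0 + conv a (fun k => b (k + 1)) n :=
  Nat.sum_antidiagonal_succ'

theorem sum_range_mul_eq_conv (a b : ℕ → R) (c d u v : R) (m : ℕ) :
    ∑ k ∈ range (m + 1), (b (m - k) * u - v * b (m - k + 1)) * (c * a k - a (k + 1) * d)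
      = c * u * conv a b m - d * u * conv (fun k => a (k + 1)) b m
        - c * v * conv a (fun k => b (k + 1)) m
        + d * v * conv (fun k => a (k + 1)) (fun k => b (k + 1)) m := by
  simp only [conv_eq_sum_range, mul_sum, ← sum_sub_distrib, ← sum_add_distrib]
  exact sum_congr rfl fun k _ => by ring

end Hansen

open Hansen

/-- Hansen's second identity: if `(n+1) P_{n+1} = ∑_{k=0}^n r_k P_{n-k}`
for all `n ≥ 0`, then for every `m ≥ 0`:
`r_{m+1} (m+2) (P_{m+1} P_{m+3} - P_{m+2}²) = P_{m+1} (r_{m+2} P_{m+2} - r_{m+1} P_{m+3})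
  + ∑_{k=0}^m (P_{m-k} P_{m+2} - P_{m+1} P_{m-k+1}) (r_{m+2} r_k - r_{k+1} r_{m+1})`. -/
theorem stmt17 (r P : ℕ → ℝ)
    (hPrec : ∀ n : ℕ, ((n : ℝ) + 1) * P (n + 1)
      = ∑ k ∈ Finset.range (n + 1), r k * P (n - k)) :
    ∀ m : ℕ, r (m + 1) * ((m : ℝ) + 2) * (P (m + 1) * P (m + 3) - P (m + 2) ^ 2)
      = P (m + 1) * (r (m + 2) * P (m + 2) - r (m + 1) * P (m + 3))
        + ∑ k ∈ Finset.range (m + 1),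
            (P (m - k) * P (m + 2) - P (m + 1) * P (m - k + 1))
              * (r (m + 2) * r k - r (k + 1) * r (m + 1)) := by
  intro m
  have hconv (n : ℕ) : conv r P n = ((n : ℝ) + 1) * P (n + 1) := by
    rw [conv_eq_sum_range, hPrec]
  have h₁ : conv r P (m + 1) = ((m : ℝ) + 2) * P (m + 2) := by
    rw [hconv]; push_cast; ring
  have h₂ : conv r P (m + 2) = ((m : ℝ) + 3) * P (m + 3) := by
    rw [hconv]; push_cast; ring
  have hr : conv (fun k => r (k + 1)) P m = ((m : ℝ) + 2) * P (m + 2) - r 0 * P (m + 1) := by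
    linear_combination h₁ - conv_succ_left r P m
  have hP : conv r (fun k => P (k + 1)) m = ((m : ℝ) + 2) * P (m + 2) - r (m + 1) * P 0 := by
    linear_combination h₁ - conv_succ_right r P m
  have hrP : conv (fun k => r (k + 1)) (fun k => P (k + 1)) m
      = ((m : ℝ) + 3) * P (m + 3) - r (m + 2) * P 0 - r 0 * P (m + 2) := by
    linear_combination h₂ - conv_succ_right r P (m + 1) - conv_succ_left r (fun k => P (k + 1)) m
  rw [sum_range_mul_eq_conv, hconv, hr, hP, hrP]
  ring
end

section
/- Let (r_k)_{k≥0} be nonnegative reals and let (P_n)_{n≥0} satisfy P_0 > 0 and the recursion (n+1)·P_{n+1} = Σ_{k=0}^n r_k·P_{n−k} for all n ≥ 0. Fix m ≥ 1 and assume P_n > 0 for 1 ≤ n ≤ m and that (P_n) is strictly log-concave up to m, i.e., P_n² > P_{n−1}·P_{n+1} for n = 1, …, m. Then r_0·P_m − P_{m+1} > 0. -/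
/-!
The recursion at `n = 0` gives `P₁ = r₀ P₀`. Strict log-concavity turns a bound
`Pₙ ≤ r₀ Pₙ₋₁` into `Pₙ₋₁ Pₙ₊₁ < Pₙ² ≤ r₀ Pₙ₋₁ Pₙ`, i.e. `Pₙ₊₁ < r₀ Pₙ`, and this
propagates from `n = 1` up to `n = m`.
-/

lemma lt_mul_of_mul_lt_sq {a b c ρ : ℝ} (ha : 0 < a) (hb : 0 ≤ b) (hlc : a * c < b ^ 2)
    (hba : b ≤ ρ * a) : c < ρ * b := by
  have : a * c < a * (ρ * b) :=
    calc a * c < b * b := by rwa [← sq]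
      _ ≤ b * (ρ * a) := mul_le_mul_of_nonneg_left hba hb
      _ = a * (ρ * b) := by ring
  exact lt_of_mul_lt_mul_left this ha.le

lemma succ_lt_mul_of_strictLogConcave (P : ℕ → ℝ) (ρ : ℝ) (m : ℕ)
    (hpos : ∀ n ≤ m, 0 < P n)
    (hlc : ∀ n : ℕ, 1 ≤ n → n ≤ m → P (n - 1) * P (n + 1) < P n ^ 2)
    (h₁ : P 1 ≤ ρ * P 0) :
    ∀ n, n + 1 ≤ m → P (n + 2) < ρ * P (n + 1) := by
  intro n hn
  induction n with
  | zero => exact lt_mul_of_mul_lt_sq (hpos 0 (by omega)) (hpos 1 hn).le (hlc 1 le_rfl hn) h₁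
  | succ k ih =>
    exact lt_mul_of_mul_lt_sq (hpos (k + 1) (by omega)) (hpos (k + 2) hn).le
      (hlc (k + 2) (by omega) hn) (ih (by omega)).le

theorem stmt18_general (r P : ℕ → ℝ)
    (hP0 : 0 < P 0)
    (hPrec : ∀ n : ℕ, ((n : ℝ) + 1) * P (n + 1)
      = ∑ k ∈ Finset.range (n + 1), r k * P (n - k))
    (m : ℕ) (hm : 1 ≤ m)
    (hP_pos : ∀ n : ℕ, 1 ≤ n → n ≤ m → 0 < P n)
    (hP_strict_logconcave : ∀ n : ℕ, 1 ≤ n → n ≤ m → P (n - 1) * P (n + 1) < P n ^ 2) :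
    0 < r 0 * P m - P (m + 1) := by
  have hP₁ : P 1 = r 0 * P 0 := by simpa using hPrec 0
  have hpos : ∀ n ≤ m, 0 < P n := fun n hn =>
    n.eq_zero_or_pos.elim (fun h => h ▸ hP0) (fun h => hP_pos n h hn)
  obtain ⟨k, rfl⟩ : ∃ k, m = k + 1 := ⟨m - 1, by omega⟩
  have := succ_lt_mul_of_strictLogConcave P (r 0) (k + 1) hpos hP_strict_logconcave hP₁.le k
    le_rfl
  linarith

/-- if `(r k)` is nonnegative, `P 0 > 0`, `(n+1) P_{n+1} = ∑_{k=0}^n r_k P_{n-k}`,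
and for a fixed `m ≥ 1` one has `P n > 0` for `1 ≤ n ≤ m` and strict log-concavity
`P_{n-1} P_{n+1} < P_n²` for `n = 1, …, m`, then `r₀ Pₘ - P_{m+1} > 0`. -/
theorem stmt18 (r P : ℕ → ℝ)
    (hr_nonneg : ∀ k : ℕ, 0 ≤ r k)
    (hP0 : 0 < P 0)
    (hPrec : ∀ n : ℕ, ((n : ℝ) + 1) * P (n + 1)
      = ∑ k ∈ Finset.range (n + 1), r k * P (n - k))
    (m : ℕ) (hm : 1 ≤ m)
    (hP_pos : ∀ n : ℕ, 1 ≤ n → n ≤ m → 0 < P n)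
    (hP_strict_logconcave : ∀ n : ℕ, 1 ≤ n → n ≤ m → P (n - 1) * P (n + 1) < P n ^ 2) :
    0 < r 0 * P m - P (m + 1) :=
  stmt18_general r P hP0 hPrec m hm hP_pos hP_strict_logconcave
end

section
/- Let (r_k)_{k≥0} be strictly positive reals that are strictly log-convex (r_{k+1}² < r_k·r_{k+2} for all k ≥ 0) with r_0² < r_1, and let (P_n)_{n≥0} satisfy P_0 > 0 and the recursion (n+1)·P_{n+1} = Σ_{k=0}^n r_k·P_{n−k} for all n ≥ 0. Then for every m ≥ 0: r_{m+2}·P_{m+2} − r_{m+1}·P_{m+3} > 0. -/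
/-!
Log-convexity makes the ratios `r (n + 1) / r n` nondecreasing, and `r 0 ^ 2 < r 1` puts them all
above `r 0`. Splitting off the `k = 0` term of the recursion at index `n + 1` writes
`(n + 2) P (n + 2)` as `∑ r (i + 1) P (n - i) + r 0 P (n + 1)`; comparing term by term with the
recursion at index `n` (multiplied by these ratios) gives `r n P (n + 2) < r (n + 1) P (n + 1)`.
-/

open Finset

section LogConvex

variable {r : ℕ → ℝ}

lemma monotone_succ_div_of_logConvex (hr : ∀ k, 0 < r k)
    (hlc : ∀ k, r (k + 1) ^ 2 ≤ r k * r (k + 2)) :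
    Monotone fun n => r (n + 1) / r n := by
  refine monotone_nat_of_le_succ fun n => ?_
  rw [div_le_div_iff₀ (hr n) (hr (n + 1))]
  nlinarith [hlc n]

lemma mul_le_mul_succ_of_logConvex (hr : ∀ k, 0 < r k)
    (hlc : ∀ k, r (k + 1) ^ 2 ≤ r k * r (k + 2)) {j n : ℕ} (hjn : j ≤ n) :
    r (j + 1) * r n ≤ r j * r (n + 1) := by
  have h := monotone_succ_div_of_logConvex hr hlc hjn
  rw [div_le_div_iff₀ (hr j) (hr n)] at h
  linarith

lemma mul_lt_succ_of_logConvex (hr : ∀ k, 0 < r k)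
    (hlc : ∀ k, r (k + 1) ^ 2 ≤ r k * r (k + 2)) (h01 : r 0 ^ 2 < r 1) (n : ℕ) :
    r 0 * r n < r (n + 1) := by
  have h0 : r 0 < r 1 / r 0 := by
    rw [lt_div_iff₀ (hr 0)]
    nlinarith
  have h := monotone_succ_div_of_logConvex hr hlc (Nat.zero_le n)
  exact (lt_div_iff₀ (hr n)).mp (h0.trans_le h)

lemma mul_sum_shift_le_of_logConvex (hr : ∀ k, 0 < r k)
    (hlc : ∀ k, r (k + 1) ^ 2 ≤ r k * r (k + 2)) {P : ℕ → ℝ} (hP : ∀ n, 0 ≤ P n)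
    (n : ℕ) :
    r n * ∑ i ∈ range (n + 1), r (i + 1) * P (n - i)
      ≤ r (n + 1) * ∑ i ∈ range (n + 1), r i * P (n - i) := by
  rw [mul_sum, mul_sum]
  refine sum_le_sum fun i hi => ?_
  have hin : i ≤ n := Nat.lt_succ_iff.mp (mem_range.mp hi)
  nlinarith [mul_le_mul_of_nonneg_right (mul_le_mul_succ_of_logConvex hr hlc hin) (hP (n - i))]

end LogConvex

section Recursion

variable {r P : ℕ → ℝ}
  (hrec : ∀ n : ℕ, ((n : ℝ) + 1) * P (n + 1) = ∑ k ∈ range (n + 1), r k * P (n - k))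
include hrec

lemma pos_of_recursion (hr : ∀ k, 0 < r k) (hP0 : 0 < P 0) (n : ℕ) : 0 < P n := by
  induction n using Nat.strong_induction_on with
  | _ n ih =>
    match n with
    | 0 => exact hP0
    | m + 1 =>
      have hsum : 0 < ∑ k ∈ range (m + 1), r k * P (m - k) :=
        sum_pos (fun k _ => mul_pos (hr k) (ih (m - k) (by omega))) ⟨0, by simp⟩
      rw [← hrec m] at hsum
      exact pos_of_mul_pos_right hsum (by positivity)

lemma mul_succ_succ_lt_of_recursion (hr : ∀ k, 0 < r k)
    (hlc : ∀ k, r (k + 1) ^ 2 ≤ r k * r (k + 2)) (h01 : r 0 ^ 2 < r 1) (hP0 : 0 < P 0)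
    (n : ℕ) : r n * P (n + 2) < r (n + 1) * P (n + 1) := by
  have hPpos := pos_of_recursion hrec hr hP0
  have hsplit : ((n : ℝ) + 2) * P (n + 2)
      = ∑ i ∈ range (n + 1), r (i + 1) * P (n - i) + r 0 * P (n + 1) := by
    have h := hrec (n + 1)
    rw [sum_range_succ'] at h
    simp only [Nat.add_sub_add_right, Nat.sub_zero] at h
    push_cast at h
    linarith
  have hsum := mul_sum_shift_le_of_logConvex hr hlc (fun n => (hPpos n).le) n
  have hhead := mul_lt_mul_of_pos_right (mul_lt_succ_of_logConvex hr hlc h01 n) (hPpos (n + 1))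
  have h : ((n : ℝ) + 2) * (r n * P (n + 2)) < ((n : ℝ) + 2) * (r (n + 1) * P (n + 1)) := by
    rw [← hrec n] at hsum
    calc ((n : ℝ) + 2) * (r n * P (n + 2))
        = r n * ∑ i ∈ range (n + 1), r (i + 1) * P (n - i) + r 0 * r n * P (n + 1) := by
          rw [mul_left_comm, hsplit]; ring
      _ < r (n + 1) * ((n + 1) * P (n + 1)) + r (n + 1) * P (n + 1) :=
          add_lt_add_of_le_of_lt hsum hhead
      _ = ((n : ℝ) + 2) * (r (n + 1) * P (n + 1)) := by ring
  exact lt_of_mul_lt_mul_left h (by positivity)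

end Recursion

/-- if `(r k)` is strictly positive and strictly log-convex
(`r_{k+1}² < r_k r_{k+2}` for all `k ≥ 0`) with `r₀² < r₁`, and `P 0 > 0` with
`(n+1) P_{n+1} = ∑_{k=0}^n r_k P_{n-k}` for all `n ≥ 0`, then for every `m ≥ 0`:
`r_{m+2} P_{m+2} - r_{m+1} P_{m+3} > 0`. -/
theorem stmt19 (r P : ℕ → ℝ)
    (hr_pos : ∀ k : ℕ, 0 < r k)
    (hr_strict_logconvex : ∀ k : ℕ, r (k + 1) ^ 2 < r k * r (k + 2))
    (hr01 : r 0 ^ 2 < r 1)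
    (hP0 : 0 < P 0)
    (hPrec : ∀ n : ℕ, ((n : ℝ) + 1) * P (n + 1)
      = ∑ k ∈ Finset.range (n + 1), r k * P (n - k)) :
    ∀ m : ℕ, 0 < r (m + 2) * P (m + 2) - r (m + 1) * P (m + 3) := fun m =>
  sub_pos.mpr <| mul_succ_succ_lt_of_recursion hPrec hr_pos
    (fun k => (hr_strict_logconvex k).le) hr01 hP0 (m + 1)
end
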